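/- arXiv:1107.1078 — 8 statements merged into one kernel-verified Lean document; each statement's English description precedes it below -/
import Mathlib

section
/- If the market (f, S) is arbitrage-free, then there exists a full support martingale measure for (f, S). -/
open MeasureTheory Filter Topology

variable {Ω : Type*}

section Defs

variable [TopologicalSpace Ω] [MeasurableSpace Ω]

/-- A portfolio `π` is an arbitrage for the market `(f, S)`:
nonpositive cost, nonnegative payoff everywhere, strictly positive payoff somewhere. -/
def IsArbitrage {D : ℕ} (f : Fin (D + 1) → ℝ) (S : Fin (D + 1) → C(Ω, ℝ))
    (π : Fin (D + 1) → ℝ) : Prop :=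
  (∑ d, π d * f d) ≤ 0 ∧ (∀ ω : Ω, 0 ≤ ∑ d, π d * S d ω) ∧ (∃ ω : Ω, 0 < ∑ d, π d * S d ω)

/-- The market `(f, S)` is arbitrage-free. -/
def ArbitrageFree {D : ℕ} (f : Fin (D + 1) → ℝ) (S : Fin (D + 1) → C(Ω, ℝ)) : Prop :=
  ¬ ∃ π : Fin (D + 1) → ℝ, IsArbitrage f S π

/-- A measure has full support: every nonempty open set has positive measure. -/
def HasFullSupport (P : Measure Ω) : Prop :=
  ∀ U : Set Ω, IsOpen U → U.Nonempty → 0 < P U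

/-- A martingale measure for the market `(f, S)`: a Borel probability measure under which
every asset payoff is integrable with expectation equal to its time-0 price. -/
def IsMartingaleMeasure {D : ℕ} (f : Fin (D + 1) → ℝ) (S : Fin (D + 1) → C(Ω, ℝ))
    (P : Measure Ω) : Prop :=
  IsProbabilityMeasure P ∧ ∀ d, Integrable (S d) P ∧ (∫ ω, S d ω ∂P) = f d

/-- A portfolio `π` is a superhedge for the claim `H`. -/
def IsSuperhedge {D : ℕ} (S : Fin (D + 1) → C(Ω, ℝ)) (H : C(Ω, ℝ))
    (π : Fin (D + 1) → ℝ) : Prop :=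
  ∀ ω : Ω, H ω ≤ ∑ d, π d * S d ω

/-- A portfolio `π` is a subhedge for the claim `H`. -/
def IsSubhedge {D : ℕ} (S : Fin (D + 1) → C(Ω, ℝ)) (H : C(Ω, ℝ))
    (π : Fin (D + 1) → ℝ) : Prop :=
  ∀ ω : Ω, (∑ d, π d * S d ω) ≤ H ω

end Defs

/-! The price vectors of full-support martingale measures form a convex set `M ⊆ ℝ^{D+1}`. It is
nonempty: Dirac masses on a dense sequence, with weights decaying fast enough to integrate `S`,
give a full-support measure. Mixing the Dirac mass at `ω` with a little of a full-support measure
shows that the payoff vector `S(ω)` lies in the closure of `M`. If `f ∉ M`, a properly separating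
functional `π` satisfies `π·f ≤ π·m` on `M`, strictly for some `m`; hence `π·S ≥ π·f` everywhere
and, since `m` is an average of payoffs, strictly somewhere. Buying `π` and borrowing its cost in
the bond `S₀ = 1` is then an arbitrage. -/

open scoped ENNReal

lemma exists_le_lt_of_notMem_of_interior_nonempty {E : Type*} [TopologicalSpace E]
    [AddCommGroup E] [Module ℝ E] [IsTopologicalAddGroup E] [ContinuousSMul ℝ E]
    {C : Set E} {x : E} (hC : Convex ℝ C) (hint : (interior C).Nonempty) (hx : x ∉ C) :
    ∃ g : E →L[ℝ] ℝ, (∀ y ∈ C, g x ≤ g y) ∧ ∃ y ∈ C, g x < g y := by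
  obtain ⟨g, hg⟩ := geometric_hahn_banach_open_point hC.interior isOpen_interior
    (fun h => hx (interior_subset h))
  obtain ⟨y₀, hy₀⟩ := hint
  refine ⟨-g, fun y hy => ?_, y₀, interior_subset hy₀, by simpa using hg y₀ hy₀⟩
  have hcl : closure (interior C) ⊆ {y | g y ≤ g x} :=
    closure_minimal (fun y hy => (hg y hy).le) (isClosed_le g.continuous continuous_const)
  rw [hC.closure_interior_eq_closure_of_nonempty_interior ⟨y₀, hy₀⟩] at hcl
  simpa using hcl (subset_closure hy)

lemma affineSpan_coe_preimage_span_eq_top {k V : Type*} [Ring k] [AddCommGroup V] [Module k V]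
    {C : Set V} (h0 : (0 : V) ∈ affineSpan k C) :
    affineSpan k ((↑) ⁻¹' C : Set (Submodule.span k C)) = ⊤ := by
  set C' : Set (Submodule.span k C) := (↑) ⁻¹' C
  have hmap : (affineSpan k C').map (Submodule.span k C).subtype.toAffineMap = affineSpan k C := by
    rw [AffineSubspace.map_span]
    congr 1
    simp only [C', LinearMap.coe_toAffineMap, Submodule.coe_subtype]
    exact Set.image_preimage_eq_of_subset fun x hx => ⟨⟨x, Submodule.subset_span hx⟩, rfl⟩
  obtain ⟨v, hv, hv0⟩ := (hmap ▸ h0 : (0 : V) ∈ (affineSpan k C').map _)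
  obtain rfl : v = 0 := Subtype.ext hv0
  rw [← AffineSubspace.coe_eq_univ_iff, ← affineSpan_insert_eq_affineSpan k hv,
    affineSpan_insert_zero, Submodule.span_span_coe_preimage, Submodule.top_coe]

lemma exists_nonneg_pos_of_zero_notMem {E : Type*} [NormedAddCommGroup E] [NormedSpace ℝ E]
    [FiniteDimensional ℝ E] {C : Set E} (hC : Convex ℝ C) (hne : C.Nonempty) (h0 : (0 : E) ∉ C) :
    ∃ g : E →L[ℝ] ℝ, (∀ y ∈ C, 0 ≤ g y) ∧ ∃ y ∈ C, 0 < g y := by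
  -- If `0 ∈ affineSpan C`, then `C` has interior in its linear span; otherwise the closed
  -- affine span of `C` is strictly separated from `0`.
  by_cases hA : (0 : E) ∈ affineSpan ℝ C
  · set V := Submodule.span ℝ C
    have hC' : Convex ℝ ((↑) ⁻¹' C : Set V) := hC.linear_preimage V.subtype
    obtain ⟨g', hg', y, hy, hlt⟩ := exists_le_lt_of_notMem_of_interior_nonempty hC'
      (hC'.interior_nonempty_iff_affineSpan_eq_top.2 (affineSpan_coe_preimage_span_eq_top hA))
      (x := 0) (by simpa using h0)
    obtain ⟨g, hg, -⟩ := exists_extension_norm_eq V g'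
    refine ⟨g, fun z hz => ?_, y, hy, ?_⟩
    · simpa [← hg] using hg' ⟨z, Submodule.subset_span hz⟩ hz
    · simpa [hg] using hlt
  · obtain ⟨g, u, hgu, hg⟩ := geometric_hahn_banach_point_closed (affineSpan ℝ C).convex
      (AffineSubspace.closed_of_finiteDimensional _) hA
    rw [map_zero] at hgu
    have hpos : ∀ y ∈ C, 0 < g y := fun y hy => hgu.trans (hg y (subset_affineSpan ℝ C hy))
    obtain ⟨y, hy⟩ := hne
    exact ⟨g, fun z hz => (hpos z hz).le, y, hy, hpos y hy⟩

lemma exists_le_lt_of_notMem {E : Type*} [NormedAddCommGroup E] [NormedSpace ℝ E]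
    [FiniteDimensional ℝ E] {C : Set E} {x : E} (hC : Convex ℝ C) (hne : C.Nonempty) (hx : x ∉ C) :
    ∃ g : E →L[ℝ] ℝ, (∀ y ∈ C, g x ≤ g y) ∧ ∃ y ∈ C, g x < g y := by
  obtain ⟨g, hg, _, ⟨y, hy, rfl⟩, hlt⟩ := exists_nonneg_pos_of_zero_notMem (hC.translate (-x))
    (hne.image _) (by simpa [neg_add_eq_zero, eq_comm] using hx)
  refine ⟨g, fun z hz => ?_, y, hy, ?_⟩
  · simpa using hg _ ⟨z, hz, rfl⟩
  · simpa using hlt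

lemma LinearMap.apply_eq_sum_apply_single_mul {R ι : Type*} [CommSemiring R] [Fintype ι]
    [DecidableEq ι] (g : (ι → R) →ₗ[R] R) (x : ι → R) : g x = ∑ d, g (Pi.single d 1) * x d := by
  conv_lhs => rw [← Finset.univ_sum_single x]
  refine (map_sum g _ _).trans (Finset.sum_congr rfl fun d _ => ?_)
  rw [mul_comm, ← smul_eq_mul, ← map_smul, ← Pi.single_smul', smul_eq_mul, mul_one]

section Market

variable [TopologicalSpace Ω] {D : ℕ} {S : Fin (D + 1) → C(Ω, ℝ)} {f g : Fin (D + 1) → ℝ}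

lemma isArbitrage_sub_cost (hS0 : ∀ ω, S 0 ω = 1) (hf0 : f 0 = 1) {π : Fin (D + 1) → ℝ}
    (hle : ∀ ω, ∑ d, π d * f d ≤ ∑ d, π d * S d ω)
    (hlt : ∃ ω, ∑ d, π d * f d < ∑ d, π d * S d ω) :
    IsArbitrage f S (π - (∑ d, π d * f d) • Pi.single 0 1) := by
  set c := ∑ d, π d * f d
  have hsum (x : Fin (D + 1) → ℝ) :
      ∑ d, (π - c • Pi.single 0 1 : Fin (D + 1) → ℝ) d * x d = ∑ d, π d * x d - c * x 0 := by
    simp [sub_mul, Finset.sum_sub_distrib, Pi.single_apply]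
  refine ⟨?_, fun ω => ?_, ?_⟩
  · rw [hsum, hf0, mul_one, sub_self]
  · rw [hsum, hS0, mul_one, sub_nonneg]
    exact hle ω
  · obtain ⟨ω, hω⟩ := hlt
    exact ⟨ω, by rwa [hsum, hS0, mul_one, sub_pos]⟩

variable [MeasurableSpace Ω] {P Q : Measure Ω}

lemma HasFullSupport.smul (hP : HasFullSupport P) {c : ℝ≥0∞} (hc : c ≠ 0) :
    HasFullSupport (c • P) := fun U hU hne => by
  simpa using ENNReal.mul_pos hc (hP U hU hne).ne'

lemma HasFullSupport.add_right (hP : HasFullSupport P) (Q : Measure Ω) :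
    HasFullSupport (P + Q) := fun U hU hne =>
  (hP U hU hne).trans_le (by simp)

lemma HasFullSupport.add_left (hQ : HasFullSupport Q) (P : Measure Ω) :
    HasFullSupport (P + Q) :=
  add_comm Q P ▸ hQ.add_right P

lemma exists_isProbabilityMeasure_hasFullSupport_integrable [OpensMeasurableSpace Ω]
    [TopologicalSpace.SeparableSpace Ω] [Nonempty Ω] {h : Ω → ℝ} (hh : Continuous h) :
    ∃ P : Measure Ω, IsProbabilityMeasure P ∧ HasFullSupport P ∧ Integrable h P := by
  set u := TopologicalSpace.denseSeq Ω
  -- These weights bound both the total mass and `∫⁻ ‖h‖ₑ` by `∑ 2⁻¹ ^ n`.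
  set r : ℕ → ℝ≥0∞ := fun n => 2⁻¹ ^ n / (1 + ‖h (u n)‖ₑ)
  set μ : Measure Ω := Measure.sum fun n => r n • Measure.dirac (u n)
  have hr_pos : ∀ n, r n ≠ 0 := fun n =>
    (ENNReal.div_pos_iff.2 ⟨by simp, by simp⟩).ne'
  have hr_le : ∀ n, r n ≤ 2⁻¹ ^ n := fun n =>
    ENNReal.div_le_of_le_mul (le_mul_of_one_le_right' le_self_add)
  have hr_mul_le : ∀ n, r n * ‖h (u n)‖ₑ ≤ 2⁻¹ ^ n := fun n =>
    calc r n * ‖h (u n)‖ₑ ≤ r n * (1 + ‖h (u n)‖ₑ) := by gcongr; exact le_add_self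
      _ = 2⁻¹ ^ n := ENNReal.div_mul_cancel (by simp) (by simp)
  have hgeom : ∑' n : ℕ, (2⁻¹ : ℝ≥0∞) ^ n ≠ ⊤ := by
    simp [ENNReal.tsum_geometric]
  have hμ_full : HasFullSupport μ := fun U hU hne => by
    obtain ⟨n, hn⟩ := (TopologicalSpace.denseRange_denseSeq Ω).exists_mem_open hU hne
    refine lt_of_lt_of_le ?_ (Measure.le_sum _ n U)
    simpa [Measure.dirac_apply_of_mem (show u n ∈ U from hn)] using pos_iff_ne_zero.2 (hr_pos n)
  have hμ_univ : μ Set.univ ≠ ⊤ := by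
    rw [Measure.sum_apply _ MeasurableSet.univ]
    simp only [Measure.smul_apply, measure_univ, smul_eq_mul, mul_one]
    exact ne_top_of_le_ne_top hgeom (ENNReal.tsum_le_tsum hr_le)
  have hμ_int : Integrable h μ := by
    refine ⟨hh.aestronglyMeasurable, ?_⟩
    rw [HasFiniteIntegral, lintegral_sum_measure]
    simp only [lintegral_smul_measure, lintegral_dirac' _ hh.measurable.enorm, smul_eq_mul]
    exact (ENNReal.tsum_le_tsum hr_mul_le).trans_lt hgeom.lt_top
  have : IsFiniteMeasure μ := ⟨hμ_univ.lt_top⟩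
  have : NeZero μ := ⟨fun h0 => by simpa [h0] using hμ_full _ isOpen_univ Set.univ_nonempty⟩
  exact ⟨(μ Set.univ)⁻¹ • μ, isProbabilityMeasureSMul, hμ_full.smul (by simp [hμ_univ]),
    hμ_int.smul_measure (by simp [NeZero.ne μ])⟩

lemma isMartingaleMeasure_dirac [OpensMeasurableSpace Ω] (ω : Ω) :
    IsMartingaleMeasure (fun d => S d ω) S (Measure.dirac ω) :=
  ⟨inferInstance, fun d => ⟨integrable_dirac' (S d).continuous.stronglyMeasurable (by simp),
    integral_dirac' _ _ (S d).continuous.stronglyMeasurable⟩⟩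

lemma IsMartingaleMeasure.smul_add (hP : IsMartingaleMeasure f S P)
    (hQ : IsMartingaleMeasure g S Q) {a b : ℝ} (ha : 0 ≤ a) (hb : 0 ≤ b) (hab : a + b = 1) :
    IsMartingaleMeasure (a • f + b • g) S (ENNReal.ofReal a • P + ENNReal.ofReal b • Q) := by
  obtain ⟨_, hP⟩ := hP
  obtain ⟨_, hQ⟩ := hQ
  refine ⟨⟨by simp [← ENNReal.ofReal_add ha hb, hab]⟩, fun d => ?_⟩
  obtain ⟨hPint, hPd⟩ := hP d
  obtain ⟨hQint, hQd⟩ := hQ d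
  have hPint' := hPint.smul_measure (ENNReal.ofReal_ne_top (r := a))
  have hQint' := hQint.smul_measure (ENNReal.ofReal_ne_top (r := b))
  refine ⟨hPint'.add_measure hQint', ?_⟩
  rw [integral_add_measure hPint' hQint', integral_smul_measure, integral_smul_measure, hPd, hQd,
    ENNReal.toReal_ofReal ha, ENNReal.toReal_ofReal hb]
  rfl

lemma IsMartingaleMeasure.integral_portfolio (hP : IsMartingaleMeasure f S P)
    (π : Fin (D + 1) → ℝ) : ∫ ω, ∑ d, π d * S d ω ∂P = ∑ d, π d * f d := by
  rw [integral_finsetSum _ fun d _ => ((hP.2 d).1.const_mul (π d))]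
  simp [integral_const_mul, (hP.2 _).2]

lemma IsMartingaleMeasure.exists_lt_payoff (hP : IsMartingaleMeasure f S P)
    {π : Fin (D + 1) → ℝ} {c : ℝ} (hc : c < ∑ d, π d * f d) :
    ∃ ω, c < ∑ d, π d * S d ω := by
  have := hP.1
  by_contra! h
  have hle := integral_mono (integrable_finsetSum _ fun d _ => (hP.2 d).1.const_mul (π d))
    (integrable_const c) h
  rw [hP.integral_portfolio, integral_const, probReal_univ, one_smul] at hle
  linarith

def fullSupportPrices (S : Fin (D + 1) → C(Ω, ℝ)) : Set (Fin (D + 1) → ℝ) :=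
  {v | ∃ P : Measure Ω, IsMartingaleMeasure v S P ∧ HasFullSupport P}

lemma convex_fullSupportPrices : Convex ℝ (fullSupportPrices S) := by
  rintro v ⟨P, hP, hPfull⟩ w ⟨Q, hQ, hQfull⟩ a b ha hb hab
  refine ⟨_, hP.smul_add hQ ha hb hab, ?_⟩
  rcases ha.lt_or_eq with ha' | rfl
  · exact (hPfull.smul (ENNReal.ofReal_pos.2 ha').ne').add_right _
  · exact (hQfull.smul (by simp [show b = 1 by linarith])).add_left _

lemma openSegment_subset_fullSupportPrices [OpensMeasurableSpace Ω] (ω : Ω)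
    {v : Fin (D + 1) → ℝ} (hv : v ∈ fullSupportPrices S) :
    openSegment ℝ (fun d => S d ω) v ⊆ fullSupportPrices S := by
  obtain ⟨P, hP, hPfull⟩ := hv
  rintro _ ⟨a, b, ha, hb, hab, rfl⟩
  exact ⟨_, (isMartingaleMeasure_dirac ω).smul_add hP ha.le hb.le hab,
    (hPfull.smul (ENNReal.ofReal_pos.2 hb).ne').add_left _⟩

lemma payoff_mem_closure_fullSupportPrices [OpensMeasurableSpace Ω]
    (hne : (fullSupportPrices S).Nonempty) (ω : Ω) :
    (fun d => S d ω) ∈ closure (fullSupportPrices S) :=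
  closure_mono (openSegment_subset_fullSupportPrices ω hne.some_mem)
    (segment_subset_closure_openSegment (left_mem_segment ℝ _ _))

lemma fullSupportPrices_nonempty [OpensMeasurableSpace Ω] [TopologicalSpace.SeparableSpace Ω]
    [Nonempty Ω] (S : Fin (D + 1) → C(Ω, ℝ)) : (fullSupportPrices S).Nonempty := by
  obtain ⟨P, hP, hPfull, hint⟩ := exists_isProbabilityMeasure_hasFullSupport_integrable
    (h := fun ω => ∑ d, |S d ω|) (by fun_prop)
  have hSint : ∀ d, Integrable (S d) P := fun d =>
    hint.mono' (S d).continuous.aestronglyMeasurable (ae_of_all _ fun ω =>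
      Finset.single_le_sum (f := fun d => |S d ω|) (fun _ _ => abs_nonneg _) (Finset.mem_univ d))
  exact ⟨fun d => ∫ ω, S d ω ∂P, P, ⟨hP, fun d => ⟨hSint d, rfl⟩⟩, hPfull⟩

end Market

theorem arbitrageFree_implies_fullSupportMartingaleMeasure_general
    [MetricSpace Ω] [Nonempty Ω] [TopologicalSpace.SeparableSpace Ω]
    [MeasurableSpace Ω] [BorelSpace Ω] {D : ℕ} (f : Fin (D + 1) → ℝ) (S : Fin (D + 1) → C(Ω, ℝ))
    (hS0 : ∀ ω, S 0 ω = 1) (hf0 : f 0 = 1)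
    (hNA : ArbitrageFree f S) :
    ∃ P : Measure Ω, IsMartingaleMeasure f S P ∧ HasFullSupport P := by
  by_contra hfM
  obtain ⟨g, hge, v, hv, hgv⟩ :=
    exists_le_lt_of_notMem convex_fullSupportPrices (fullSupportPrices_nonempty S) hfM
  set π : Fin (D + 1) → ℝ := fun d => g (Pi.single d 1)
  have hg : ∀ x, g x = ∑ d, π d * x d :=
    (g : (Fin (D + 1) → ℝ) →ₗ[ℝ] ℝ).apply_eq_sum_apply_single_mul
  have hle : ∀ ω, g f ≤ g (fun d => S d ω) := fun ω =>
    closure_minimal hge (isClosed_le continuous_const g.continuous)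
      (payoff_mem_closure_fullSupportPrices (fullSupportPrices_nonempty S) ω)
  obtain ⟨P, hP, -⟩ := hv
  simp only [hg] at hle hgv
  exact hNA ⟨_, isArbitrage_sub_cost hS0 hf0 hle (hP.exists_lt_payoff hgv)⟩

/-- no arbitrage implies existence of a full support martingale measure. -/
theorem arbitrageFree_implies_fullSupportMartingaleMeasure
    [MetricSpace Ω] [Nonempty Ω] [TopologicalSpace.SeparableSpace Ω] [CompleteSpace Ω]
    [MeasurableSpace Ω] [BorelSpace Ω] {D : ℕ} (f : Fin (D + 1) → ℝ) (S : Fin (D + 1) → C(Ω, ℝ))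
    (hf : ∀ d, 0 ≤ f d) (hS : ∀ d ω, 0 ≤ S d ω)
    (hS0 : ∀ ω, S 0 ω = 1) (hf0 : f 0 = 1)
    (hNA : ArbitrageFree f S) :
    ∃ P : Measure Ω, IsMartingaleMeasure f S P ∧ HasFullSupport P :=
  arbitrageFree_implies_fullSupportMartingaleMeasure_general f S hS0 hf0 hNA
end

section
/- If the market (f, S) is viable, then there exists a strictly positive linear functional Φ : C(Ω, ℝ) → ℝ (i.e., Φ(X) > 0 whenever X ≥ 0 pointwise and X ≠ 0) such that Φ(π·S) = π·f for every portfolio π ∈ ℝ^{D+1}. -/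
open MeasureTheory Filter Topology

variable {Ω : Type*}

/-- The market `(f, S)` is viable: there is a complete, transitive, continuous and strictly
monotone preference relation on `C(Ω, ℝ)` for which no trade is optimal at budget `0`. -/
def Viable [TopologicalSpace Ω] {D : ℕ} (f : Fin (D + 1) → ℝ)
    (S : Fin (D + 1) → C(Ω, ℝ)) : Prop :=
  ∃ R : C(Ω, ℝ) → C(Ω, ℝ) → Prop,
    -- complete
    (∀ X Y, R X Y ∨ R Y X) ∧
    -- transitive
    (∀ X Y Z, R X Y → R Y Z → R X Z) ∧
    -- continuous: better-than and worse-than sets are closed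
    (∀ X, IsClosed {Z | R Z X}) ∧
    (∀ X, IsClosed {Z | R X Z}) ∧
    -- strictly monotone
    (∀ (Z X : C(Ω, ℝ)), (∀ ω, 0 ≤ X ω) → X ≠ 0 → (R (Z + X) Z ∧ ¬ R Z (Z + X))) ∧
    -- no trade is optimal at budget 0
    (∀ π : Fin (D + 1) → ℝ, (∑ d, π d * f d) ≤ 0 → R 0 (∑ d, π d • S d))

/-!
Viability rules out arbitrage, so the price functional is well defined on the finite-dimensional
space `M` of replicable payoffs and strictly positive there; by compactness of the positive part
of the unit sphere of `M` it even dominates `m * ‖·‖` for some `m > 0`. A weighted series of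
point evaluations along a dense sequence is a strictly positive functional `μ ≤ ‖·‖` on
`C(Ω, ℝ)`. Then `price - m • μ` is positive on `M`, which contains the constants, so the Riesz
extension theorem extends it to a positive functional on `C(Ω, ℝ)`; adding back `m • μ` gives a
strictly positive extension of the price functional.
-/

theorem LinearMap.exists_comp_eq_of_ker_le {K V₁ V₂ : Type*} [Field K] [AddCommGroup V₁]
    [Module K V₁] [AddCommGroup V₂] [Module K V₂] (T : V₁ →ₗ[K] V₂) (F : V₁ →ₗ[K] K)
    (h : LinearMap.ker T ≤ LinearMap.ker F) : ∃ G : V₂ →ₗ[K] K, G ∘ₗ T = F := by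
  suffices F ∈ LinearMap.range T.dualMap from this
  rw [LinearMap.range_dualMap_eq_dualAnnihilator_ker, Submodule.mem_dualAnnihilator]
  exact fun x hx => h hx

theorem exists_mul_norm_le_of_pos_on_cone {E : Type*} [NormedAddCommGroup E] [NormedSpace ℝ E]
    [FiniteDimensional ℝ E] {C : Set E} (hC : IsClosed C)
    (hsmul : ∀ x ∈ C, ∀ a : ℝ, 0 < a → a • x ∈ C) (ℓ : E →ₗ[ℝ] ℝ)
    (hℓ : ∀ x ∈ C, x ≠ 0 → 0 < ℓ x) :
    ∃ m : ℝ, 0 < m ∧ ∀ x ∈ C, m * ‖x‖ ≤ ℓ x := by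
  have hK : IsCompact (C ∩ Metric.sphere 0 1) := (isCompact_sphere 0 1).inter_left hC
  obtain ⟨m, hm, hmK⟩ := hK.exists_forall_le' ℓ.continuous_of_finiteDimensional.continuousOn
    fun x hx => hℓ x hx.1 (ne_zero_of_mem_unit_sphere ⟨x, hx.2⟩)
  refine ⟨m, hm, fun x hx => ?_⟩
  rcases eq_or_ne x 0 with rfl | hx0
  · simp
  have hxn : 0 < ‖x‖ := norm_pos_iff.2 hx0
  have hmx := hmK (‖x‖⁻¹ • x) ⟨hsmul x hx _ (inv_pos.2 hxn), by simp [norm_smul, hxn.ne']⟩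
  rw [map_smul, smul_eq_mul] at hmx
  calc m * ‖x‖ ≤ (‖x‖⁻¹ * ℓ x) * ‖x‖ := by gcongr
    _ = ℓ x := by field_simp

namespace ContinuousMap

variable [TopologicalSpace Ω] [CompactSpace Ω]

omit [CompactSpace Ω] in
theorem isClosed_setOf_nonneg : IsClosed {X : C(Ω, ℝ) | 0 ≤ X} := by
  simp only [ContinuousMap.le_def, Set.ofPred_forall]
  exact isClosed_iInter fun ω => isClosed_le continuous_const (continuous_eval_const ω)

theorem summable_apply_div_two_pow (u : ℕ → Ω) (X : C(Ω, ℝ)) :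
    Summable fun n => X (u n) / 2 / 2 ^ n :=
  (summable_geometric_two' ‖X‖).of_norm_bounded fun n => by
    simpa [abs_div] using div_le_div_of_nonneg_right (div_le_div_of_nonneg_right
      (X.norm_coe_le_norm (u n)) zero_le_two) (by positivity : (0 : ℝ) ≤ 2 ^ n)

noncomputable def diracSeries (u : ℕ → Ω) : C(Ω, ℝ) →ₗ[ℝ] ℝ where
  toFun X := ∑' n, X (u n) / 2 / 2 ^ n
  map_add' X Y := by
    simp only [add_apply, add_div]
    exact (summable_apply_div_two_pow u X).tsum_add (summable_apply_div_two_pow u Y)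
  map_smul' c X := by
    simp only [smul_apply, smul_eq_mul, RingHom.id_apply, mul_div_assoc, tsum_mul_left]

theorem diracSeries_le_norm (u : ℕ → Ω) (X : C(Ω, ℝ)) : diracSeries u X ≤ ‖X‖ :=
  calc diracSeries u X ≤ ∑' n, ‖X‖ / 2 / 2 ^ n :=
        (summable_apply_div_two_pow u X).tsum_le_tsum
          (fun n => by gcongr; exact (le_abs_self _).trans (X.norm_coe_le_norm _))
          (summable_geometric_two' ‖X‖)
    _ = ‖X‖ := tsum_geometric_two' ‖X‖

theorem diracSeries_pos {u : ℕ → Ω} (hu : DenseRange u) {X : C(Ω, ℝ)} (hX : 0 < X) :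
    0 < diracSeries u X := by
  obtain ⟨hX0, ω, hω⟩ := ContinuousMap.lt_def.1 hX
  obtain ⟨n, hn⟩ := hu.exists_mem_open (isOpen_lt continuous_const X.continuous) ⟨ω, hω⟩
  exact (summable_apply_div_two_pow u X).tsum_pos
    (fun k => div_nonneg (div_nonneg (hX0 _) zero_le_two) (by positivity)) n
    (div_pos (div_pos hn two_pos) (by positivity))

theorem exists_strictlyPositive_extension [TopologicalSpace.SeparableSpace Ω] [Nonempty Ω]
    (M : Submodule ℝ C(Ω, ℝ)) [FiniteDimensional ℝ M] (h1 : (1 : C(Ω, ℝ)) ∈ M)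
    (ℓ : M →ₗ[ℝ] ℝ) (hℓ : ∀ x : M, 0 < (x : C(Ω, ℝ)) → 0 < ℓ x) :
    ∃ Φ : C(Ω, ℝ) →ₗ[ℝ] ℝ, (∀ X, 0 < X → 0 < Φ X) ∧ ∀ x : M, Φ x = ℓ x := by
  set u := TopologicalSpace.denseSeq Ω
  set μ := diracSeries u
  obtain ⟨m, hm, hmℓ⟩ := exists_mul_norm_le_of_pos_on_cone (C := {x : M | 0 ≤ (x : C(Ω, ℝ))})
    (isClosed_setOf_nonneg.preimage continuous_subtype_val)
    (fun x (hx : 0 ≤ (x : C(Ω, ℝ))) a ha => by simpa using smul_nonneg ha.le hx) ℓ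
    (fun x hx hx0 => hℓ x (lt_of_le_of_ne hx (by simpa [eq_comm] using hx0)))
  have hnn : ∀ x : M, 0 ≤ (x : C(Ω, ℝ)) → 0 ≤ (ℓ - m • μ.domRestrict M) x := by
    intro x hx
    have := mul_le_mul_of_nonneg_left (diracSeries_le_norm u x) hm.le
    simp only [LinearMap.sub_apply, LinearMap.smul_apply, LinearMap.domRestrict_apply,
      smul_eq_mul, sub_nonneg]
    exact this.trans (hmℓ x hx)
  obtain ⟨g, hgℓ, hg⟩ := riesz_extension (PointedCone.positive ℝ C(Ω, ℝ))
    ⟨M, ℓ - m • μ.domRestrict M⟩ hnn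
    (fun X => ⟨⟨‖X‖ • 1, M.smul_mem _ h1⟩, ContinuousMap.le_def.2 fun ω => by
      have := (abs_le.1 (X.norm_coe_le_norm ω)).1
      simp only [zero_apply, add_apply, smul_apply, one_apply, smul_eq_mul, mul_one]
      linarith⟩)
  refine ⟨g + m • μ, fun X hX => ?_, fun x => ?_⟩
  · exact add_pos_of_nonneg_of_pos (hg X hX.le)
      (mul_pos hm (diracSeries_pos (TopologicalSpace.denseRange_denseSeq Ω) hX))
  · simp [hgℓ x]

end ContinuousMap

section Market

variable [TopologicalSpace Ω] {D : ℕ} {f : Fin (D + 1) → ℝ} {S : Fin (D + 1) → C(Ω, ℝ)}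

theorem portfolio_sum_apply (π : Fin (D + 1) → ℝ) (ω : Ω) :
    (∑ d, π d • S d) ω = ∑ d, π d * S d ω := by
  simp

theorem Viable.arbitrageFree (hv : Viable f S) : ArbitrageFree f S := by
  rintro ⟨π, hcost, hnonneg, ω, hω⟩
  obtain ⟨R, -, -, -, -, hmono, hopt⟩ := hv
  have hX : ∑ d, π d • S d ≠ 0 := fun h => by simp [← portfolio_sum_apply, h] at hω
  exact (hmono 0 _ (by simpa using hnonneg) hX).2 (by simpa using hopt π hcost)

theorem ArbitrageFree.cost_pos (h : ArbitrageFree f S) {π : Fin (D + 1) → ℝ}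
    (hπ : 0 < ∑ d, π d • S d) : 0 < ∑ d, π d * f d := by
  obtain ⟨hnonneg, ω, hω⟩ := ContinuousMap.lt_def.1 hπ
  by_contra! hcost
  exact h ⟨π, hcost, fun ω => by simpa using hnonneg ω, ω, by simpa using hω⟩

theorem ArbitrageFree.cost_nonneg [Nonempty Ω] (h : ArbitrageFree f S) (hS0 : ∀ ω, S 0 ω = 1)
    (hf0 : f 0 = 1) {π : Fin (D + 1) → ℝ} (hπ : 0 ≤ ∑ d, π d • S d) : 0 ≤ ∑ d, π d * f d := by
  by_contra! hcost
  set c := ∑ d, π d * f d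
  have hshort : ∀ g : Fin (D + 1) → ℝ,
      ∑ d, (π - Pi.single 0 c : Fin (D + 1) → ℝ) d * g d = ∑ d, π d * g d - c * g 0 :=
    fun g => by simp [sub_mul, Finset.sum_sub_distrib, Pi.single_apply]
  -- buying `-c > 0` units of the riskless asset turns `π` into a zero-cost arbitrage
  have hpay : ∀ ω, -c ≤ ∑ d, (π - Pi.single 0 c : Fin (D + 1) → ℝ) d * S d ω := fun ω => by
    have := ContinuousMap.le_def.1 hπ ω
    simp only [hshort, hS0, ContinuousMap.zero_apply, portfolio_sum_apply] at this ⊢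
    linarith
  exact h ⟨_, by rw [hshort, hf0]; linarith, fun ω => by linarith [hpay ω], Classical.arbitrary Ω,
    by linarith [hpay (Classical.arbitrary Ω)]⟩

theorem ArbitrageFree.exists_price_functional [Nonempty Ω] (h : ArbitrageFree f S)
    (hS0 : ∀ ω, S 0 ω = 1) (hf0 : f 0 = 1) :
    ∃ G : C(Ω, ℝ) →ₗ[ℝ] ℝ, ∀ π : Fin (D + 1) → ℝ, G (∑ d, π d • S d) = ∑ d, π d * f d := by
  obtain ⟨G, hG⟩ := (Fintype.linearCombination ℝ S).exists_comp_eq_of_ker_le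
    (Fintype.linearCombination ℝ f) fun π hπ => by
      rw [LinearMap.mem_ker, Fintype.linearCombination_apply] at hπ ⊢
      have h₁ := h.cost_nonneg hS0 hf0 hπ.ge
      have h₂ := h.cost_nonneg hS0 hf0 (π := -π) (by simpa using hπ.le)
      simp only [Pi.neg_apply, neg_mul, Finset.sum_neg_distrib, neg_nonneg] at h₂
      exact le_antisymm h₂ h₁
  exact ⟨G, fun π => by simpa [Fintype.linearCombination_apply] using LinearMap.congr_fun hG π⟩

end Market

theorem viable_implies_strictly_positive_extension_general
    [MetricSpace Ω] [Nonempty Ω] [CompactSpace Ω] {D : ℕ} (f : Fin (D + 1) → ℝ) (S : Fin (D + 1) → C(Ω, ℝ))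
    (hS0 : ∀ ω, S 0 ω = 1) (hf0 : f 0 = 1)
    (hv : Viable f S) :
    ∃ Φ : C(Ω, ℝ) →ₗ[ℝ] ℝ,
      (∀ X : C(Ω, ℝ), (∀ ω, 0 ≤ X ω) → X ≠ 0 → 0 < Φ X) ∧
      (∀ π : Fin (D + 1) → ℝ, Φ (∑ d, π d • S d) = ∑ d, π d * f d) := by
  have hnoarb := hv.arbitrageFree
  obtain ⟨G, hG⟩ := hnoarb.exists_price_functional hS0 hf0
  set M := LinearMap.range (Fintype.linearCombination ℝ S)
  have hpayoff : ∀ π, Fintype.linearCombination ℝ S π = ∑ d, π d • S d :=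
    Fintype.linearCombination_apply ℝ S
  have h1 : (1 : C(Ω, ℝ)) ∈ M :=
    ⟨Pi.single 0 1, by ext ω; simp [Fintype.linearCombination_apply_single, hS0]⟩
  have hpos : ∀ x : M, 0 < (x : C(Ω, ℝ)) → 0 < G.domRestrict M x := by
    rintro ⟨_, π, rfl⟩ hx
    simpa [hpayoff, hG] using hnoarb.cost_pos (by simpa [hpayoff] using hx)
  obtain ⟨Φ, hΦpos, hΦ⟩ := ContinuousMap.exists_strictlyPositive_extension M h1 _ hpos
  refine ⟨Φ, fun X hX hne => hΦpos X (lt_of_le_of_ne (ContinuousMap.le_def.2 hX) hne.symm),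
    fun π => ?_⟩
  simpa [hpayoff, hG] using hΦ ⟨_, π, rfl⟩

/-- a viable market admits a strictly positive linear extension of the price
functional to all of `C(Ω, ℝ)`. -/
theorem viable_implies_strictly_positive_extension
    [MetricSpace Ω] [Nonempty Ω] [CompactSpace Ω] [TopologicalSpace.SeparableSpace Ω]
    [CompleteSpace Ω] [MeasurableSpace Ω] [BorelSpace Ω] {D : ℕ} (f : Fin (D + 1) → ℝ) (S : Fin (D + 1) → C(Ω, ℝ))
    (hf : ∀ d, 0 ≤ f d) (hS : ∀ d ω, 0 ≤ S d ω)
    (hS0 : ∀ ω, S 0 ω = 1) (hf0 : f 0 = 1)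
    (hv : Viable f S) :
    ∃ Φ : C(Ω, ℝ) →ₗ[ℝ] ℝ,
      (∀ X : C(Ω, ℝ), (∀ ω, 0 ≤ X ω) → X ≠ 0 → 0 < Φ X) ∧
      (∀ π : Fin (D + 1) → ℝ, Φ (∑ d, π d • S d) = ∑ d, π d * f d) :=
  viable_implies_strictly_positive_extension_general f S hS0 hf0 hv
end

section
/- If there exists a strictly positive linear functional Φ : C(Ω, ℝ) → ℝ (i.e., Φ(X) > 0 whenever X ≥ 0 pointwise and X ≠ 0) such that Φ(π·S) = π·f for every portfolio π ∈ ℝ^{D+1}, then the market (f, S) is viable. -/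
open MeasureTheory Filter Topology

variable {Ω : Type*}

/-- a strictly positive linear extension of the price functional to all of
`C(Ω, ℝ)` makes the market viable. -/
theorem strictly_positive_extension_implies_viable
    [MetricSpace Ω] [Nonempty Ω] [CompactSpace Ω] [TopologicalSpace.SeparableSpace Ω]
    [CompleteSpace Ω] [MeasurableSpace Ω] [BorelSpace Ω] {D : ℕ} (f : Fin (D + 1) → ℝ) (S : Fin (D + 1) → C(Ω, ℝ))
    (hf : ∀ d, 0 ≤ f d) (hS : ∀ d ω, 0 ≤ S d ω)
    (hS0 : ∀ ω, S 0 ω = 1) (hf0 : f 0 = 1)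
    (hΦ : ∃ Φ : C(Ω, ℝ) →ₗ[ℝ] ℝ,
      (∀ X : C(Ω, ℝ), (∀ ω, 0 ≤ X ω) → X ≠ 0 → 0 < Φ X) ∧
      (∀ π : Fin (D + 1) → ℝ, Φ (∑ d, π d • S d) = ∑ d, π d * f d)) :
    Viable f S := by
  obtain ⟨Φ, hpos, hext⟩ := hΦ
  have hnonneg : ∀ X : C(Ω, ℝ), (∀ ω, 0 ≤ X ω) → 0 ≤ Φ X := by
    intro X hX
    by_cases h : X = 0
    · simp [h]
    · exact le_of_lt (hpos X hX h)
  have hΦ1 : Φ 1 = 1 := by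
    have h1 : (∑ d, (Pi.single 0 1 : Fin (D+1) → ℝ) d • S d) = (1 : C(Ω,ℝ)) := by
      rw [Finset.sum_eq_single 0]
      · ext ω; simp [hS0 ω]
      · intro b _ hb; simp [Pi.single_eq_of_ne hb]
      · simp
    have h2 := hext (Pi.single 0 1)
    rw [h1] at h2
    rw [h2, Finset.sum_eq_single 0]
    · simp [hf0]
    · intro b _ hb; simp [Pi.single_eq_of_ne hb]
    · simp
  have hbound : ∀ X : C(Ω,ℝ), Φ X ≤ ‖X‖ := by
    intro X
    have h0 : (0:ℝ) ≤ Φ ((‖X‖ : ℝ) • (1 : C(Ω,ℝ)) - X) := by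
      apply hnonneg
      intro ω
      simp only [ContinuousMap.sub_apply, ContinuousMap.smul_apply, ContinuousMap.one_apply,
        smul_eq_mul, mul_one, sub_nonneg]
      calc X ω ≤ ‖X ω‖ := le_abs_self _
        _ ≤ ‖X‖ := ContinuousMap.norm_coe_le_norm X ω
    rw [map_sub, Φ.map_smul, hΦ1, smul_eq_mul, mul_one, sub_nonneg] at h0
    exact h0
  have hcont : Continuous Φ := by
    have hb : ∀ X : C(Ω,ℝ), ‖Φ X‖ ≤ 1 * ‖X‖ := by
      intro X
      rw [one_mul, Real.norm_eq_abs, abs_le]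
      refine ⟨?_, hbound X⟩
      have := hbound (-X)
      rw [map_neg, norm_neg] at this
      linarith
    exact (Φ.mkContinuous 1 hb).continuous
  refine ⟨fun X Y => Φ Y ≤ Φ X, fun X Y => le_total _ _,
    fun X Y Z h1 h2 => h2.trans h1, ?_, ?_, ?_, ?_⟩
  · intro X
    exact isClosed_le continuous_const hcont
  · intro X
    exact isClosed_le hcont continuous_const
  · intro Z X hX hX0
    have hp := hpos X hX hX0
    have ha : Φ (Z + X) = Φ Z + Φ X := map_add Φ Z X
    constructor
    · show Φ Z ≤ Φ (Z + X); linarith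
    · show ¬ Φ (Z + X) ≤ Φ Z; intro h; linarith
  · intro π hπ
    show Φ (∑ d, π d • S d) ≤ Φ 0
    rw [map_zero, hext π]
    exact hπ
end

section
/- Let H : Ω → ℝ be a continuous nonnegative function (a contingent claim) and h ≥ 0. Then h is a no-arbitrage price for H — that is, the extended market with D+2 assets obtained by adjoining the asset with price f_{D+1} = h and payoff S_{D+1} = H is arbitrage-free — if and only if there exists a full support martingale measure P for the original market (f, S) under which H is integrable and h = ∫ H dP. -/
open MeasureTheory Filter Topology

variable {Ω : Type*}

/-!
No arbitrage means that no linear functional is nonnegative on all net gains `S ω - f` and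
positive on one of them. In finite dimensions this says that `0` lies in the relative interior
of the convex hull of the gains: for every `g` in the closure of the hull, some `-(t • g)` with
`t > 0` lies in the hull. Let `μ` charge a dense sequence, with weights small enough for the gains
to be integrable, and let `g` be their mean under `μ`. If `-(t • g)` is the mean under a finitely
supported `ν`, then `(ν + t • μ) / (1 + t)` is a full support martingale measure. Conversely, a full
support martingale measure charges the open set where the payoff of an arbitrage is positive,
so the payoff has positive mean although it costs nothing.
-/

section ProperSeparation

variable {E : Type*} [NormedAddCommGroup E] [NormedSpace ℝ E] [FiniteDimensional ℝ E] {s : Set E}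

theorem exists_forall_le_lt_of_notMem_interior_convexHull (hs : affineSpan ℝ s = ⊤) {x : E}
    (hx : x ∉ interior (convexHull ℝ s)) :
    ∃ φ : StrongDual ℝ E, (∀ y ∈ s, φ x ≤ φ y) ∧ ∃ y ∈ s, φ x < φ y := by
  have hC := convex_convexHull ℝ s
  obtain ⟨a, ha⟩ := interior_convexHull_nonempty_iff_affineSpan_eq_top.mpr hs
  obtain ⟨φ, hφ⟩ := geometric_hahn_banach_point_open hC.interior isOpen_interior hx
  have hle : convexHull ℝ s ⊆ {y | φ x ≤ φ y} := by
    refine subset_closure.trans ?_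
    rw [← hC.closure_interior_eq_closure_of_nonempty_interior ⟨a, ha⟩]
    exact closure_minimal (fun y hy => (hφ y hy).le) (isClosed_le continuous_const φ.continuous)
  refine ⟨φ, fun y hy => hle (subset_convexHull ℝ s hy), ?_⟩
  by_contra! hall
  have : convexHull ℝ s ⊆ {y | φ y ≤ φ x} :=
    convexHull_min hall (convex_halfSpace_le φ.isLinear _)
  exact (hφ a ha).not_ge (this (interior_subset ha))

theorem exists_nonneg_pos_of_span_eq_top (hs : Submodule.span ℝ s = ⊤) {g : E}
    (hg : g ∈ closure (convexHull ℝ s)) (hgs : ∀ t : ℝ, 0 < t → -(t • g) ∉ convexHull ℝ s) :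
    ∃ φ : StrongDual ℝ E, (∀ y ∈ s, 0 ≤ φ y) ∧ ∃ y ∈ s, 0 < φ y := by
  have hC := convex_convexHull ℝ s
  by_cases h0 : (0 : E) ∈ closure (convexHull ℝ s)
  · have h0span : (0 : E) ∈ affineSpan ℝ s :=
      closure_minimal (convexHull_subset_affineSpan s)
        (AffineSubspace.closed_of_finiteDimensional _) h0
    have hspan : affineSpan ℝ s = ⊤ := by
      rw [← AffineSubspace.direction_eq_top_iff_of_nonempty ⟨0, h0span⟩, eq_top_iff, ← hs,
        Submodule.span_le]
      intro y hy
      simpa using AffineSubspace.vsub_mem_direction (subset_affineSpan ℝ s hy) h0span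
    have h0int : (0 : E) ∉ interior (convexHull ℝ s) := by
      intro h0int
      have hline : Tendsto (fun t : ℝ => -(t • g)) (𝓝[>] 0) (𝓝 0) := by
        have : Continuous (fun t : ℝ => -(t • g)) := by fun_prop
        simpa using this.tendsto' 0 0 (by simp) |>.mono_left nhdsWithin_le_nhds
      obtain ⟨t, hint, ht⟩ :=
        ((hline.eventually (isOpen_interior.mem_nhds h0int)).and self_mem_nhdsWithin).exists
      exact hgs t ht (interior_subset hint)
    simpa using exists_forall_le_lt_of_notMem_interior_convexHull hspan h0int
  · obtain ⟨φ, u, h0u, hu⟩ := geometric_hahn_banach_point_closed hC.closure isClosed_closure h0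
    obtain ⟨y₀, hy₀⟩ : s.Nonempty := by
      by_contra! hempty
      simp [hempty] at hg
    have hpos : ∀ y ∈ s, 0 < φ y := fun y hy => by
      simpa using h0u.trans (hu y (subset_closure (subset_convexHull ℝ s hy)))
    exact ⟨φ, fun y hy => (hpos y hy).le, y₀, hy₀, hpos y₀ hy₀⟩

theorem exists_nonneg_pos_of_forall_neg_smul_notMem_convexHull {g : E}
    (hg : g ∈ closure (convexHull ℝ s)) (hgs : ∀ t : ℝ, 0 < t → -(t • g) ∉ convexHull ℝ s) :
    ∃ φ : E →ₗ[ℝ] ℝ, (∀ y ∈ s, 0 ≤ φ y) ∧ ∃ y ∈ s, 0 < φ y := by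
  set V := Submodule.span ℝ s
  have hsV : s ⊆ V := Submodule.subset_span
  have hVclosed : IsClosed (V : Set E) := V.closed_of_finiteDimensional
  have hhull : ((↑) : V → E) '' convexHull ℝ ((↑) ⁻¹' s) = convexHull ℝ s := by
    have := V.subtype.image_convexHull ((↑) ⁻¹' s)
    rwa [Submodule.coe_subtype, Set.image_preimage_eq_of_subset (by simpa using hsV)] at this
  have hembed : Topology.IsClosedEmbedding ((↑) : V → E) := hVclosed.isClosedEmbedding_subtypeVal
  have hgV : g ∈ V := closure_minimal (convexHull_min hsV V.convex) hVclosed hg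
  have hg' : (⟨g, hgV⟩ : V) ∈ closure (convexHull ℝ ((↑) ⁻¹' s)) := by
    rw [← hhull, hembed.closure_image_eq] at hg
    obtain ⟨g', hg', rfl⟩ := hg
    exact hg'
  obtain ⟨φ, hφ, y, hy, hφy⟩ := exists_nonneg_pos_of_span_eq_top Submodule.span_span_coe_preimage
    hg' fun t ht hmem => hgs t ht (hhull ▸ ⟨_, hmem, rfl⟩)
  obtain ⟨ψ, hψ⟩ := LinearMap.exists_extend (φ : V →ₗ[ℝ] ℝ)
  have hψV : ∀ v : V, ψ v = φ v := fun v => LinearMap.congr_fun hψ v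
  exact ⟨ψ, fun z hz => (hψV ⟨z, hsV hz⟩).symm ▸ hφ _ hz, y, hy, (hψV y).symm ▸ hφy⟩

end ProperSeparation

section MeasuresWithPrescribedMean

variable {E : Type*} [MeasurableSpace Ω] [MeasurableSingletonClass Ω] [NormedAddCommGroup E]

theorem exists_isProbabilityMeasure_isOpenPosMeasure_integrable [TopologicalSpace Ω]
    [TopologicalSpace.SeparableSpace Ω] [Nonempty Ω] (Ψ : Ω → E) :
    ∃ μ : Measure Ω, IsProbabilityMeasure μ ∧ μ.IsOpenPosMeasure ∧ Integrable Ψ μ := by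
  obtain ⟨u, hu⟩ := TopologicalSpace.exists_dense_seq Ω
  -- `c n * ‖Ψ (u n)‖ ≤ 2⁻ⁿ`, so `Ψ` is integrable
  set c : ℕ → ℝ := fun n => (1 / 2 : ℝ) ^ n / (1 + ‖Ψ (u n)‖)
  have hc_pos : ∀ n, 0 < c n := fun n => by positivity
  have hc_le : ∀ n, c n ≤ (1 / 2 : ℝ) ^ n := fun n =>
    div_le_self (by positivity) (le_add_of_nonneg_right (norm_nonneg _))
  have hgeom : Summable fun n : ℕ => (1 / 2 : ℝ) ^ n := summable_geometric_two
  set μ := Measure.sum fun n => ENNReal.ofReal (c n) • Measure.dirac (u n)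
  have hμ_univ : μ Set.univ = ENNReal.ofReal (∑' n, c n) := by
    simp [μ, ENNReal.ofReal_tsum_of_nonneg (fun n => (hc_pos n).le)
      (hgeom.of_nonneg_of_le (fun n => (hc_pos n).le) hc_le)]
  have : IsFiniteMeasure μ := ⟨by simp [hμ_univ]⟩
  have : μ.IsOpenPosMeasure := by
    refine ⟨fun U hU hne => ?_⟩
    obtain ⟨n, hn⟩ := hu.exists_mem_open hU hne
    refine (lt_of_lt_of_le ?_ ((Measure.le_sum _ n) U)).ne'
    simpa [Measure.dirac_apply_of_mem hn] using hc_pos n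
  refine ⟨(μ Set.univ)⁻¹ • μ, inferInstance,
    Measure.isOpenPosMeasure_smul μ (ENNReal.inv_ne_zero.2 (measure_ne_top μ _)),
    Integrable.smul_measure ?_ (ENNReal.inv_ne_top.2 (NeZero.ne _))⟩
  refine integrable_sum_dirac (fun n => ENNReal.ofReal_ne_top) (hgeom.of_nonneg_of_le
    (fun n => by positivity) fun n => ?_)
  rw [ENNReal.toReal_ofReal (hc_pos n).le, div_mul_eq_mul_div, div_le_iff₀ (by positivity)]
  nlinarith [norm_nonneg (Ψ (u n)), pow_pos (by norm_num : (0 : ℝ) < 1 / 2) n]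

variable [NormedSpace ℝ E] [CompleteSpace E] {Ψ : Ω → E}

theorem exists_isProbabilityMeasure_integral_eq_of_mem_convexHull {z : E}
    (hz : z ∈ convexHull ℝ (Set.range Ψ)) :
    ∃ ν : Measure Ω, IsProbabilityMeasure ν ∧ Integrable Ψ ν ∧ ∫ ω, Ψ ω ∂ν = z := by
  rw [convexHull_range_eq_exists_affineCombination] at hz
  obtain ⟨s, w, hw0, hw1, rfl⟩ := hz
  set ν := ∑ ω ∈ s, ENNReal.ofReal (w ω) • Measure.dirac ω
  have hint : ∀ ω ∈ s, Integrable Ψ (ENNReal.ofReal (w ω) • Measure.dirac ω) := fun ω _ =>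
    (integrable_dirac (by simp)).smul_measure ENNReal.ofReal_ne_top
  refine ⟨ν, ⟨?_⟩, integrable_finsetSum_measure.2 hint, ?_⟩
  · simp [ν, ← ENNReal.ofReal_sum_of_nonneg hw0, hw1]
  · rw [integral_finsetSum_measure hint, s.affineCombination_eq_linear_combination Ψ w hw1]
    refine Finset.sum_congr rfl fun ω hω => ?_
    rw [integral_smul_measure, integral_dirac, ENNReal.toReal_ofReal (hw0 ω hω)]

theorem exists_isProbabilityMeasure_isOpenPosMeasure_integral_eq_zero [FiniteDimensional ℝ E]
    [TopologicalSpace Ω] [TopologicalSpace.SeparableSpace Ω] [Nonempty Ω]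
    (hΨ : ¬∃ φ : E →ₗ[ℝ] ℝ, (∀ ω, 0 ≤ φ (Ψ ω)) ∧ ∃ ω, 0 < φ (Ψ ω)) :
    ∃ P : Measure Ω, IsProbabilityMeasure P ∧ P.IsOpenPosMeasure ∧ Integrable Ψ P ∧
      ∫ ω, Ψ ω ∂P = 0 := by
  obtain ⟨μ, hμ, hμpos, hμΨ⟩ := exists_isProbabilityMeasure_isOpenPosMeasure_integrable Ψ
  set g := ∫ ω, Ψ ω ∂μ
  have hg : g ∈ closure (convexHull ℝ (Set.range Ψ)) :=
    (convex_convexHull ℝ _).closure.integral_mem isClosed_closure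
      (ae_of_all _ fun ω => subset_closure (subset_convexHull ℝ _ ⟨ω, rfl⟩)) hμΨ
  -- `0` is a convex combination of `g` and a point `-(t • g)` of the convex hull
  obtain ⟨t, ht, htg⟩ : ∃ t : ℝ, 0 < t ∧ -(t • g) ∈ convexHull ℝ (Set.range Ψ) := by
    by_contra! h
    obtain ⟨φ, hφ, _, ⟨ω, rfl⟩, hω⟩ :=
      exists_nonneg_pos_of_forall_neg_smul_notMem_convexHull hg h
    exact hΨ ⟨φ, fun ω => hφ _ ⟨ω, rfl⟩, ω, hω⟩
  obtain ⟨ν, hν, hνΨ, hνg⟩ := exists_isProbabilityMeasure_integral_eq_of_mem_convexHull htg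
  set a := (1 + t)⁻¹
  have ha : 0 < a := by positivity
  refine ⟨ENNReal.ofReal a • ν + ENNReal.ofReal (t * a) • μ, ⟨?_⟩, ?_, ?_, ?_⟩
  · simp only [Measure.add_apply, Measure.smul_apply, measure_univ, smul_eq_mul, mul_one]
    rw [← ENNReal.ofReal_add ha.le (by positivity), ← one_add_mul, mul_inv_cancel₀ (by positivity),
      ENNReal.ofReal_one]
  · have : (ENNReal.ofReal (t * a) • μ).IsOpenPosMeasure :=
      Measure.isOpenPosMeasure_smul μ (ENNReal.ofReal_pos.2 (by positivity)).ne'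
    exact (Measure.le_add_left (le_refl (ENNReal.ofReal (t * a) • μ))).isOpenPosMeasure
  · exact (hνΨ.smul_measure ENNReal.ofReal_ne_top).add_measure
      (hμΨ.smul_measure ENNReal.ofReal_ne_top)
  · rw [integral_add_measure (hνΨ.smul_measure ENNReal.ofReal_ne_top)
      (hμΨ.smul_measure ENNReal.ofReal_ne_top), integral_smul_measure, integral_smul_measure,
      hνg, ENNReal.toReal_ofReal ha.le, ENNReal.toReal_ofReal (by positivity)]
    rw [smul_neg, smul_smul, mul_comm, neg_add_cancel]

end MeasuresWithPrescribedMean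

section Market

variable [TopologicalSpace Ω] {D : ℕ} {f : Fin (D + 1) → ℝ} {S : Fin (D + 1) → C(Ω, ℝ)}

def gain (f : Fin (D + 1) → ℝ) (S : Fin (D + 1) → C(Ω, ℝ)) (ω : Ω) : Fin (D + 1) → ℝ :=
  fun d => S d ω - f d

theorem exists_isArbitrage_of_linearMap (hS0 : ∀ ω, S 0 ω = 1) (hf0 : f 0 = 1)
    (φ : (Fin (D + 1) → ℝ) →ₗ[ℝ] ℝ) (hφ : ∀ ω, 0 ≤ φ (gain f S ω)) {ω₀ : Ω}
    (hω₀ : 0 < φ (gain f S ω₀)) : ∃ π, IsArbitrage f S π := by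
  set π₁ : Fin (D + 1) → ℝ := fun d => φ (fun j => if d = j then 1 else 0)
  set c := ∑ d, π₁ d * f d
  have hφ_gain : ∀ ω, φ (gain f S ω) = ∑ d, π₁ d * S d ω - c := fun ω => by
    rw [φ.pi_apply_eq_sum_univ, ← Finset.sum_sub_distrib]
    exact Finset.sum_congr rfl fun d _ => by simp only [gain, smul_eq_mul, π₁]; ring
  -- shorting `c` units of the riskless asset makes the cost zero and the payoff `φ ∘ gain`
  set π : Fin (D + 1) → ℝ := fun d => π₁ d - if d = 0 then c else 0
  have hπ : ∀ v : Fin (D + 1) → ℝ, ∑ d, π d * v d = ∑ d, π₁ d * v d - c * v 0 := fun v => by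
    simp [π, sub_mul, Finset.sum_sub_distrib]
  refine ⟨π, ?_, fun ω => ?_, ω₀, ?_⟩
  · simp [hπ, hf0, c]
  · simpa [hπ, hS0, ← hφ_gain] using hφ ω
  · simpa [hπ, hS0, ← hφ_gain] using hω₀

theorem isMartingaleMeasure_of_integral_gain_eq_zero [MeasurableSpace Ω] {P : Measure Ω}
    [IsProbabilityMeasure P] (hint : Integrable (gain f S) P) (h0 : ∫ ω, gain f S ω ∂P = 0) :
    IsMartingaleMeasure f S P := by
  refine ⟨inferInstance, fun d => ?_⟩
  have hd : Integrable (fun ω => S d ω - f d) P := hint.eval d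
  have hSd : Integrable (S d) P :=
    (hd.add (integrable_const (f d))).congr (ae_of_all _ fun ω => sub_add_cancel _ _)
  refine ⟨hSd, ?_⟩
  have := congr_fun h0 d
  rw [eval_integral hint.eval d] at this
  simpa [gain, integral_sub hSd (integrable_const _), sub_eq_zero] using this

theorem IsMartingaleMeasure.arbitrageFree [MeasurableSpace Ω] {P : Measure Ω}
    (hP : IsMartingaleMeasure f S P) [P.IsOpenPosMeasure] : ArbitrageFree f S := by
  rintro ⟨π, hcost, hpayoff, ω₀, hω₀⟩
  set V : Ω → ℝ := fun ω => ∑ d, π d * S d ω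
  have hVint : Integrable V P := integrable_finsetSum _ fun d _ => (hP.2 d).1.const_mul (π d)
  have hVmean : ∫ ω, V ω ∂P = ∑ d, π d * f d := by
    rw [integral_finsetSum _ fun d _ => (hP.2 d).1.const_mul (π d)]
    simp [integral_const_mul, (hP.2 _).2]
  have hVcont : Continuous V := by fun_prop
  have hpos : 0 < P (Function.support V) :=
    (isOpen_ne_fun hVcont continuous_const).measure_pos P ⟨ω₀, hω₀.ne'⟩
  have := (integral_pos_iff_support_of_nonneg hpayoff hVint).2 hpos
  linarith

theorem isMartingaleMeasure_snoc_iff [MeasurableSpace Ω] {P : Measure Ω} {H : C(Ω, ℝ)} {h : ℝ} :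
    IsMartingaleMeasure (Fin.snoc f h) (Fin.snoc S H) P ↔
      IsMartingaleMeasure f S P ∧ Integrable H P ∧ ∫ ω, H ω ∂P = h := by
  simp only [IsMartingaleMeasure, Fin.forall_fin_succ', Fin.snoc_castSucc, Fin.snoc_last]
  tauto

theorem hasFullSupport_iff_isOpenPosMeasure [MeasurableSpace Ω] {P : Measure Ω} :
    HasFullSupport P ↔ P.IsOpenPosMeasure :=
  ⟨fun h => ⟨fun U hU hne => (h U hU hne).ne'⟩, fun _ _ hU hne => hU.measure_pos P hne⟩

theorem arbitrageFree_iff_exists_isMartingaleMeasure_hasFullSupport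
    [TopologicalSpace.SeparableSpace Ω] [Nonempty Ω] [MeasurableSpace Ω]
    [MeasurableSingletonClass Ω] (hS0 : ∀ ω, S 0 ω = 1) (hf0 : f 0 = 1) :
    ArbitrageFree f S ↔ ∃ P : Measure Ω, IsMartingaleMeasure f S P ∧ HasFullSupport P := by
  simp only [hasFullSupport_iff_isOpenPosMeasure]
  constructor
  · intro hAF
    obtain ⟨P, _, hPpos, hint, h0⟩ :=
      exists_isProbabilityMeasure_isOpenPosMeasure_integral_eq_zero (Ψ := gain f S)
        fun ⟨φ, hφ, _, hω₀⟩ => hAF (exists_isArbitrage_of_linearMap hS0 hf0 φ hφ hω₀)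
    exact ⟨P, isMartingaleMeasure_of_integral_gain_eq_zero hint h0, hPpos⟩
  · rintro ⟨P, hP, _⟩
    exact hP.arbitrageFree

end Market

theorem noArbitragePrice_iff_fullSupportMartingaleMeasure_general
    [MetricSpace Ω] [Nonempty Ω] [TopologicalSpace.SeparableSpace Ω]
    [MeasurableSpace Ω] [BorelSpace Ω] {D : ℕ} (f : Fin (D + 1) → ℝ) (S : Fin (D + 1) → C(Ω, ℝ))
    (hS0 : ∀ ω, S 0 ω = 1) (hf0 : f 0 = 1)
    (H : C(Ω, ℝ)) (h : ℝ) :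
    ArbitrageFree (Fin.snoc f h) (Fin.snoc S H) ↔
      ∃ P : Measure Ω, IsMartingaleMeasure f S P ∧ HasFullSupport P ∧
        Integrable H P ∧ h = ∫ ω, H ω ∂P := by
  have hzero : (0 : Fin (D + 2)) = Fin.castSucc 0 := rfl
  rw [arbitrageFree_iff_exists_isMartingaleMeasure_hasFullSupport
    (fun ω => by rw [hzero, Fin.snoc_castSucc, hS0]) (by rw [hzero, Fin.snoc_castSucc, hf0])]
  refine exists_congr fun P => ?_
  rw [isMartingaleMeasure_snoc_iff, eq_comm (a := h)]
  tauto

/-- `h` is a no-arbitrage price for the claim `H` (the extended market with the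
additional asset `(h, H)` is arbitrage-free) iff `h = ∫ H dP` for some full support
martingale measure `P` of the original market making `H` integrable. -/
theorem noArbitragePrice_iff_fullSupportMartingaleMeasure
    [MetricSpace Ω] [Nonempty Ω] [TopologicalSpace.SeparableSpace Ω] [CompleteSpace Ω]
    [MeasurableSpace Ω] [BorelSpace Ω] {D : ℕ} (f : Fin (D + 1) → ℝ) (S : Fin (D + 1) → C(Ω, ℝ))
    (hf : ∀ d, 0 ≤ f d) (hS : ∀ d ω, 0 ≤ S d ω)
    (hS0 : ∀ ω, S 0 ω = 1) (hf0 : f 0 = 1)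
    (H : C(Ω, ℝ)) (hH : ∀ ω, 0 ≤ H ω) (h : ℝ) (hh : 0 ≤ h) :
    ArbitrageFree (Fin.snoc f h) (Fin.snoc S H) ↔
      ∃ P : Measure Ω, IsMartingaleMeasure f S P ∧ HasFullSupport P ∧
        Integrable H P ∧ h = ∫ ω, H ω ∂P :=
  noArbitragePrice_iff_fullSupportMartingaleMeasure_general f S hS0 hf0 H h
end

section
/- Suppose Ω is compact and the market (f, S) is arbitrage-free, and let H : Ω → ℝ be a continuous nonnegative claim. Then strong duality holds between superhedging and martingale pricing: inf{ π·f : π ∈ ℝ^{D+1} is a superhedge for H } = sup{ ∫ H dμ : μ is a martingale measure for (f, S) }. -/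
open MeasureTheory Filter Topology

variable {Ω : Type*}

/-!
Let `K ⊆ ℝ × ℝ^{D+1}` be the convex hull of the joint payoffs `ω ↦ (H ω, S ω)`; it is compact
by Carathéodory, and its points are exactly the joint prices of `(H, S)` under finitely supported
probability measures. No arbitrage, via a separating hyperplane, puts `f` in the projection of `K`,
so the fibre `{y | (y, f) ∈ K}` is a nonempty compact interval of martingale prices of `H`; let `β`
be its maximum. Separating `(β + ε, f)` from `K` gives a hyperplane that is not vertical in the
claim direction, and normalising it yields a superhedge costing less than `β + ε`. Together with
weak duality (integrate a superhedge against a martingale measure) both sides equal `β`.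
-/

open MeasureTheory Set

theorem convexHull_eq_biUnion_image_stdSimplex {E : Type*} [AddCommGroup E] [Module ℝ E]
    [FiniteDimensional ℝ E] (s : Set E) :
    convexHull ℝ s = ⋃ k ≤ Module.finrank ℝ E + 1,
      (fun p : (Fin k → ℝ) × (Fin k → E) => ∑ i, p.1 i • p.2 i) ''
        (stdSimplex ℝ (Fin k) ×ˢ univ.pi fun _ => s) := by
  refine Subset.antisymm (fun x hx => ?_) (iUnion₂_subset fun k _ => ?_)
  · obtain ⟨ι, _, z, w, hzs, hz, hw₀, hw₁, rfl⟩ := eq_pos_convex_span_of_mem_convexHull hx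
    have hcard : Fintype.card ι ≤ Module.finrank ℝ E + 1 :=
      hz.card_le_finrank_succ.trans (by grw [Submodule.finrank_le])
    let e := Fintype.equivFin ι
    refine mem_biUnion (x := Fintype.card ι) hcard ⟨(w ∘ e.symm, z ∘ e.symm), ⟨⟨?_, ?_⟩, ?_⟩, ?_⟩
    · exact fun i => (hw₀ _).le
    · simpa [e.symm.sum_comp w] using hw₁
    · exact fun i _ => hzs (mem_range_self _)
    · exact e.symm.sum_comp fun i => w i • z i
  · rintro _ ⟨⟨w, z⟩, ⟨hw, hz⟩, rfl⟩
    exact (convex_convexHull ℝ s).sum_mem (fun i _ => hw.1 i) hw.2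
      fun i _ => subset_convexHull ℝ s (hz i (mem_univ i))

theorem IsCompact.convexHull {E : Type*} [NormedAddCommGroup E] [NormedSpace ℝ E]
    [FiniteDimensional ℝ E] {s : Set E} (hs : IsCompact s) : IsCompact (convexHull ℝ s) := by
  rw [convexHull_eq_biUnion_image_stdSimplex]
  exact (finite_Iic _).isCompact_biUnion fun k _ =>
    ((isCompact_stdSimplex ℝ (Fin k)).prod (isCompact_univ_pi fun _ => hs)).image (by fun_prop)

theorem exists_isProbabilityMeasure_forall_integral_eq_of_mem_convexHull
    {E : Type*} [MeasurableSpace Ω] [MeasurableSingletonClass Ω] [AddCommGroup E] [Module ℝ E]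
    {Ψ : Ω → E} {x : E} (hx : x ∈ convexHull ℝ (range Ψ)) :
    ∃ μ : Measure Ω, IsProbabilityMeasure μ ∧ (∀ g : Ω → ℝ, Integrable g μ) ∧
      ∀ L : E →ₗ[ℝ] ℝ, ∫ ω, L (Ψ ω) ∂μ = L x := by
  obtain ⟨ι, _, w, z, hw₀, hw₁, hz, rfl⟩ := mem_convexHull_iff_exists_fintype.1 hx
  choose ω hω using hz
  set μ : Measure Ω := ∑ i, ENNReal.ofReal (w i) • Measure.dirac (ω i)
  have hint : ∀ (g : Ω → ℝ) i, Integrable g (ENNReal.ofReal (w i) • Measure.dirac (ω i)) :=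
    fun g i => (integrable_dirac (by simp)).smul_measure ENNReal.ofReal_ne_top
  refine ⟨μ, ⟨?_⟩, fun g => integrable_finsetSum_measure.2 fun i _ => hint g i, fun L => ?_⟩
  · simp [μ, ← ENNReal.ofReal_sum_of_nonneg fun i _ => hw₀ i, hw₁]
  · simp [μ, integral_finsetSum_measure fun i _ => hint _ i, integral_smul_measure, integral_dirac,
      ENNReal.toReal_ofReal (hw₀ _), hω]

theorem LinearMap.apply_eq_dotProduct {ι : Type*} [Fintype ι] [DecidableEq ι]
    (ℓ : (ι → ℝ) →ₗ[ℝ] ℝ) (x : ι → ℝ) : ℓ x = (fun i => ℓ (Pi.single i 1)) ⬝ᵥ x := by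
  conv_lhs => rw [← Finset.univ_sum_single x]
  refine (map_sum ℓ _ _).trans (Finset.sum_congr rfl fun i _ => ?_)
  rw [mul_comm, ← smul_eq_mul, ← map_smul, ← Pi.single_smul, smul_eq_mul, mul_one]

theorem LinearMap.apply_prod_eq_mul_add_dotProduct {ι : Type*} [Fintype ι] [DecidableEq ι]
    (ℓ : (ℝ × (ι → ℝ)) →ₗ[ℝ] ℝ) (z : ℝ) (x : ι → ℝ) :
    ℓ (z, x) = z * ℓ (1, 0) + (fun i => ℓ (0, Pi.single i 1)) ⬝ᵥ x := by
  have hsplit : (z, x) = z • ((1 : ℝ), (0 : ι → ℝ)) + (0, x) := by ext <;> simp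
  rw [hsplit, map_add, map_smul, smul_eq_mul]
  exact congrArg _ ((ℓ ∘ₗ LinearMap.inr ℝ ℝ _).apply_eq_dotProduct x)

theorem single_sub_dotProduct_of_eq_one {ι : Type*} [Fintype ι] [DecidableEq ι] {i : ι}
    {g : ι → ℝ} (hg : g i = 1) (c : ℝ) (π : ι → ℝ) :
    (Pi.single i c - π) ⬝ᵥ g = c - π ⬝ᵥ g := by
  rw [sub_dotProduct, single_dotProduct, hg, mul_one]

section Market

variable [TopologicalSpace Ω] {D : ℕ} (f : Fin (D + 1) → ℝ) (S : Fin (D + 1) → C(Ω, ℝ))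
  (H : C(Ω, ℝ))

def assetPayoffs (ω : Ω) : Fin (D + 1) → ℝ := fun d => S d ω

def claimAndAssetPayoffs (ω : Ω) : ℝ × (Fin (D + 1) → ℝ) := (H ω, assetPayoffs S ω)

def consistentPrices : Set ℝ := {y | (y, f) ∈ convexHull ℝ (range (claimAndAssetPayoffs S H))}

variable {f S H}

theorem isCompact_convexHull_range_claimAndAssetPayoffs [CompactSpace Ω] :
    IsCompact (convexHull ℝ (range (claimAndAssetPayoffs S H))) :=
  (isCompact_range (by unfold claimAndAssetPayoffs assetPayoffs; fun_prop)).convexHull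

theorem isCompact_consistentPrices [CompactSpace Ω] : IsCompact (consistentPrices f S H) :=
  (isCompact_convexHull_range_claimAndAssetPayoffs.image continuous_fst).of_isClosed_subset
    (isCompact_convexHull_range_claimAndAssetPayoffs.isClosed.preimage (by fun_prop))
    fun y hy => ⟨_, hy, rfl⟩

theorem mem_convexHull_range_assetPayoffs [Nonempty Ω] [CompactSpace Ω] (hS0 : ∀ ω, S 0 ω = 1)
    (hf0 : f 0 = 1) (hNA : ArbitrageFree f S) : f ∈ convexHull ℝ (range (assetPayoffs S)) := by
  by_contra hf
  obtain ⟨ℓ, u, hℓM, hℓf⟩ := geometric_hahn_banach_closed_point (convex_convexHull ℝ _)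
    (isCompact_range (by unfold assetPayoffs; fun_prop)).convexHull.isClosed hf
  obtain ⟨b, hb⟩ : ∃ b, ∀ x, ℓ x = b ⬝ᵥ x := ⟨_, ℓ.toLinearMap.apply_eq_dotProduct⟩
  have hpayoff (ω : Ω) : 0 < (Pi.single 0 u - b) ⬝ᵥ assetPayoffs S ω := by
    rw [single_sub_dotProduct_of_eq_one (g := assetPayoffs S ω) (hS0 ω), ← hb]
    linarith [hℓM _ (subset_convexHull ℝ _ (mem_range_self ω))]
  have hcost : (Pi.single 0 u - b) ⬝ᵥ f < 0 := by
    rw [single_sub_dotProduct_of_eq_one hf0, ← hb]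
    linarith
  exact hNA ⟨_, hcost.le, fun ω => (hpayoff ω).le, Classical.arbitrary Ω, hpayoff _⟩

theorem consistentPrices_nonempty [Nonempty Ω] [CompactSpace Ω] (hS0 : ∀ ω, S 0 ω = 1)
    (hf0 : f 0 = 1) (hNA : ArbitrageFree f S) : (consistentPrices f S H).Nonempty := by
  have hf := mem_convexHull_range_assetPayoffs hS0 hf0 hNA
  rw [show range (assetPayoffs S) = LinearMap.snd ℝ ℝ _ '' range (claimAndAssetPayoffs S H) by
    rw [← range_comp]; rfl, ← LinearMap.image_convexHull] at hf
  obtain ⟨⟨y, _⟩, hy, rfl⟩ := hf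
  exact ⟨y, hy⟩

theorem exists_isMartingaleMeasure_integral_eq [MeasurableSpace Ω] [MeasurableSingletonClass Ω]
    {y : ℝ} (hy : y ∈ consistentPrices f S H) :
    ∃ μ : Measure Ω, IsMartingaleMeasure f S μ ∧ ∫ ω, H ω ∂μ = y := by
  obtain ⟨μ, hμ, hint, hL⟩ := exists_isProbabilityMeasure_forall_integral_eq_of_mem_convexHull hy
  exact ⟨μ, ⟨hμ, fun d => ⟨hint _, hL (LinearMap.proj d ∘ₗ LinearMap.snd ℝ ℝ _)⟩⟩,
    hL (LinearMap.fst ℝ ℝ _)⟩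

theorem exists_isSuperhedge_cost_lt [CompactSpace Ω] (hS0 : ∀ ω, S 0 ω = 1) (hf0 : f 0 = 1)
    {β y : ℝ} (hβ : β ∈ consistentPrices f S H) (hy : y ∉ consistentPrices f S H) (hβy : β < y) :
    ∃ π, IsSuperhedge S H π ∧ ∑ d, π d * f d < y := by
  obtain ⟨ℓ, u, hℓK, hℓy⟩ := geometric_hahn_banach_closed_point (convex_convexHull ℝ _)
    isCompact_convexHull_range_claimAndAssetPayoffs.isClosed hy
  obtain ⟨a, b, hℓ⟩ : ∃ a b, ∀ z x, ℓ (z, x) = z * a + b ⬝ᵥ x :=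
    ⟨_, _, ℓ.toLinearMap.apply_prod_eq_mul_add_dotProduct⟩
  have hβu := hℓK _ hβ
  change u < ℓ (y, f) at hℓy
  rw [hℓ] at hβu hℓy
  have ha : 0 < a := by nlinarith
  refine ⟨a⁻¹ • (Pi.single 0 u - b), fun ω => ?_, ?_⟩
  · change H ω ≤ (a⁻¹ • (Pi.single 0 u - b)) ⬝ᵥ assetPayoffs S ω
    rw [smul_dotProduct, single_sub_dotProduct_of_eq_one (g := assetPayoffs S ω) (hS0 ω),
      smul_eq_mul, le_inv_mul_iff₀ ha]
    have := hℓK _ (subset_convexHull ℝ _ (mem_range_self ω))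
    rw [claimAndAssetPayoffs, hℓ] at this
    linarith
  · change (a⁻¹ • (Pi.single 0 u - b)) ⬝ᵥ f < y
    rw [smul_dotProduct, single_sub_dotProduct_of_eq_one hf0, smul_eq_mul, inv_mul_lt_iff₀ ha]
    linarith

theorem integral_le_cost_of_isSuperhedge [CompactSpace Ω] [MeasurableSpace Ω]
    [OpensMeasurableSpace Ω] {μ : Measure Ω} (hμ : IsMartingaleMeasure f S μ) {π : Fin (D + 1) → ℝ}
    (hπ : IsSuperhedge S H π) : ∫ ω, H ω ∂μ ≤ ∑ d, π d * f d := by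
  obtain ⟨hprob, hS⟩ := hμ
  have hint (d : Fin (D + 1)) : Integrable (fun ω => π d * S d ω) μ := (hS d).1.const_mul (π d)
  calc ∫ ω, H ω ∂μ ≤ ∫ ω, ∑ d, π d * S d ω ∂μ :=
        integral_mono (H.continuous.integrable_of_hasCompactSupport
          (HasCompactSupport.of_compactSpace _)) (integrable_finsetSum _ fun d _ => hint d) hπ
    _ = ∑ d, π d * f d := by
        simp only [integral_finsetSum _ fun d _ => hint d, integral_const_mul, (hS _).2]

end Market

theorem csInf_eq_csSup_of_forall_le_of_forall_lt_add {A B : Set ℝ} {β : ℝ} (hβ : β ∈ A)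
    (hAB : ∀ a ∈ A, ∀ b ∈ B, a ≤ b) (hB : ∀ ε > 0, ∃ b ∈ B, b < β + ε) : sInf B = sSup A := by
  have hglb : IsGLB B β := ⟨fun b hb => hAB β hβ b hb, fun c hc =>
    le_of_forall_pos_lt_add fun ε hε => let ⟨_, hb, hbβ⟩ := hB ε hε; (hc hb).trans_lt hbβ⟩
  have hgreatest : IsGreatest A β := ⟨hβ, fun a ha => hglb.2 fun b hb => hAB a ha b hb⟩
  obtain ⟨b, hb, -⟩ := hB 1 one_pos
  rw [hglb.csInf_eq ⟨b, hb⟩, hgreatest.csSup_eq]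

theorem superhedging_duality_general
    [MetricSpace Ω] [Nonempty Ω] [CompactSpace Ω]
    [MeasurableSpace Ω] [BorelSpace Ω] {D : ℕ} (f : Fin (D + 1) → ℝ) (S : Fin (D + 1) → C(Ω, ℝ))
    (hS0 : ∀ ω, S 0 ω = 1) (hf0 : f 0 = 1)
    (hNA : ArbitrageFree f S) (H : C(Ω, ℝ)) :
    sInf {x : ℝ | ∃ π : Fin (D + 1) → ℝ, IsSuperhedge S H π ∧ x = ∑ d, π d * f d} =
    sSup {x : ℝ | ∃ μ : Measure Ω, IsMartingaleMeasure f S μ ∧ x = ∫ ω, H ω ∂μ} := by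
  have hcompact : IsCompact (consistentPrices f S H) := isCompact_consistentPrices
  set β := sSup (consistentPrices f S H)
  have hβ : β ∈ consistentPrices f S H :=
    hcompact.sSup_mem (consistentPrices_nonempty hS0 hf0 hNA)
  refine csInf_eq_csSup_of_forall_le_of_forall_lt_add (β := β) ?_ ?_ fun ε hε => ?_
  · obtain ⟨μ, hμ, hHμ⟩ := exists_isMartingaleMeasure_integral_eq hβ
    exact ⟨μ, hμ, hHμ.symm⟩
  · rintro _ ⟨μ, hμ, rfl⟩ _ ⟨π, hπ, rfl⟩
    exact integral_le_cost_of_isSuperhedge hμ hπ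
  · have hβε : β < β + ε := lt_add_of_pos_right β hε
    obtain ⟨π, hπ, hcost⟩ := exists_isSuperhedge_cost_lt hS0 hf0 hβ
      (fun h => (le_csSup hcompact.bddAbove h).not_gt hβε) hβε
    exact ⟨_, ⟨π, hπ, rfl⟩, hcost⟩

/-- strong duality between superhedging and martingale pricing. -/
theorem superhedging_duality
    [MetricSpace Ω] [Nonempty Ω] [CompactSpace Ω] [TopologicalSpace.SeparableSpace Ω]
    [CompleteSpace Ω] [MeasurableSpace Ω] [BorelSpace Ω] {D : ℕ} (f : Fin (D + 1) → ℝ) (S : Fin (D + 1) → C(Ω, ℝ))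
    (hf : ∀ d, 0 ≤ f d) (hS : ∀ d ω, 0 ≤ S d ω)
    (hS0 : ∀ ω, S 0 ω = 1) (hf0 : f 0 = 1)
    (hNA : ArbitrageFree f S) (H : C(Ω, ℝ)) (hH : ∀ ω, 0 ≤ H ω) :
    sInf {x : ℝ | ∃ π : Fin (D + 1) → ℝ, IsSuperhedge S H π ∧ x = ∑ d, π d * f d} =
    sSup {x : ℝ | ∃ μ : Measure Ω, IsMartingaleMeasure f S μ ∧ x = ∫ ω, H ω ∂μ} :=
  superhedging_duality_general f S hS0 hf0 hNA H
end

section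
/- Suppose Ω is compact and the market (f, S) is arbitrage-free, and let H : Ω → ℝ be a continuous nonnegative claim. Then there exists a martingale measure P* that maximizes ∫ H dμ over all martingale measures μ for (f, S). -/
open MeasureTheory Filter Topology

variable {Ω : Type*}

/-! Martingale measures are the probability measures whose moment vector `(∫ S d ∂μ)_d` equals
`f`. By Prokhorov's theorem the probability measures on the compact space `Ω` form a compact
space, on which `μ ↦ ∫ S d ∂μ` and `μ ↦ ∫ H ∂μ` are continuous; so the martingale measures form a
compact set and `∫ H` attains its maximum on it as soon as it is nonempty. Nonemptiness is the
easy half of the fundamental theorem of asset pricing: the set of all moment vectors is compact,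
convex and contains every `S ω` (Dirac measures), so if it missed `f`, a hyperplane separating `f`
from it would be an arbitrage. -/

lemma isArbitrage_sub_single_cost [TopologicalSpace Ω] [Nonempty Ω] {D : ℕ}
    {f : Fin (D + 1) → ℝ} {S : Fin (D + 1) → C(Ω, ℝ)} (hS0 : ∀ ω, S 0 ω = 1) (hf0 : f 0 = 1)
    {π : Fin (D + 1) → ℝ} (hπ : ∀ ω, ∑ d, π d * f d < ∑ d, π d * S d ω) :
    IsArbitrage f S (π - Pi.single 0 (∑ d, π d * f d)) := by
  have value_sub_single (c : ℝ) (x : Fin (D + 1) → ℝ) (hx : x 0 = 1) :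
      ∑ d, (π - Pi.single 0 c : Fin (D + 1) → ℝ) d * x d = ∑ d, π d * x d - c := by
    simp [sub_mul, Finset.sum_sub_distrib, Pi.single_apply, hx]
  have payoff_pos (ω : Ω) :
      0 < ∑ d, (π - Pi.single 0 (∑ d, π d * f d) : Fin (D + 1) → ℝ) d * S d ω := by
    rw [value_sub_single _ (fun d => S d ω) (hS0 ω)]
    exact sub_pos.2 (hπ ω)
  refine ⟨?_, fun ω => (payoff_pos ω).le, ⟨Classical.arbitrary Ω, payoff_pos _⟩⟩
  rw [value_sub_single _ f hf0, sub_self]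

lemma ContinuousMap.integrable_of_compactSpace [TopologicalSpace Ω] [CompactSpace Ω]
    [MeasurableSpace Ω] [OpensMeasurableSpace Ω] (g : C(Ω, ℝ)) (μ : Measure Ω)
    [IsFiniteMeasure μ] : Integrable g μ :=
  g.continuous.integrable_of_hasCompactSupport (.of_compactSpace _)

section Moments

variable [TopologicalSpace Ω] [MeasurableSpace Ω] {ι : Type*} (S : ι → C(Ω, ℝ))

noncomputable def moments (μ : ProbabilityMeasure Ω) : ι → ℝ := fun i => ∫ ω, S i ω ∂μ

lemma mem_range_moments [MeasurableSingletonClass Ω] (ω : Ω) :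
    (fun i => S i ω) ∈ Set.range (moments S) :=
  ⟨⟨Measure.dirac ω, inferInstance⟩, funext fun i => by simp [moments, integral_dirac]⟩

variable [CompactSpace Ω] [OpensMeasurableSpace Ω]

lemma continuous_moments : Continuous (moments S) :=
  continuous_pi fun i => ProbabilityMeasure.continuous_integral_continuousMap (S i)

lemma convex_range_moments : Convex ℝ (Set.range (moments S)) := by
  rintro _ ⟨μ, rfl⟩ _ ⟨ν, rfl⟩ a b ha hb hab
  let ρ : Measure Ω := ENNReal.ofReal a • (μ : Measure Ω) + ENNReal.ofReal b • (ν : Measure Ω)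
  have : IsProbabilityMeasure ρ := ⟨by simp [ρ, ← ENNReal.ofReal_add ha hb, hab]⟩
  refine ⟨⟨ρ, this⟩, funext fun i => ?_⟩
  simp only [moments, ProbabilityMeasure.coe_mk, Pi.add_apply, Pi.smul_apply, smul_eq_mul]
  rw [integral_add_measure
      (((S i).integrable_of_compactSpace μ).smul_measure ENNReal.ofReal_ne_top)
      (((S i).integrable_of_compactSpace ν).smul_measure ENNReal.ofReal_ne_top),
    integral_smul_measure, integral_smul_measure, ENNReal.toReal_ofReal ha,
    ENNReal.toReal_ofReal hb, smul_eq_mul, smul_eq_mul]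

end Moments

lemma isMartingaleMeasure_iff_moments_eq [TopologicalSpace Ω] [CompactSpace Ω]
    [MeasurableSpace Ω] [OpensMeasurableSpace Ω] {D : ℕ} {f : Fin (D + 1) → ℝ}
    {S : Fin (D + 1) → C(Ω, ℝ)} (P : ProbabilityMeasure Ω) :
    IsMartingaleMeasure f S P ↔ moments S P = f :=
  ⟨fun h => funext fun d => (h.2 d).2,
    fun h => ⟨inferInstance, fun d => ⟨(S d).integrable_of_compactSpace _, congrFun h d⟩⟩⟩

lemma mem_range_moments_of_arbitrageFree [TopologicalSpace Ω] [T2Space Ω] [CompactSpace Ω]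
    [Nonempty Ω] [MeasurableSpace Ω] [BorelSpace Ω] {D : ℕ}
    {f : Fin (D + 1) → ℝ} {S : Fin (D + 1) → C(Ω, ℝ)} (hS0 : ∀ ω, S 0 ω = 1) (hf0 : f 0 = 1)
    (hNA : ArbitrageFree f S) : f ∈ Set.range (moments S) := by
  by_contra hf
  obtain ⟨φ, u, hφf, hφM⟩ := geometric_hahn_banach_point_closed (convex_range_moments S)
    (isCompact_range (continuous_moments S)).isClosed hf
  have hφ (x : Fin (D + 1) → ℝ) : φ x = ∑ d, φ (Pi.single d 1) * x d := by
    conv_lhs => rw [pi_eq_sum_univ' x]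
    simp [mul_comm]
  refine hNA ⟨_, isArbitrage_sub_single_cost (π := fun d => φ (Pi.single d 1)) hS0 hf0
    fun ω => ?_⟩
  rw [← hφ, ← hφ (fun d => S d ω)]
  exact hφf.trans (hφM _ (mem_range_moments S ω))

theorem exists_maximizing_martingaleMeasure_general
    [MetricSpace Ω] [Nonempty Ω] [CompactSpace Ω]
    [MeasurableSpace Ω] [BorelSpace Ω] {D : ℕ} (f : Fin (D + 1) → ℝ) (S : Fin (D + 1) → C(Ω, ℝ))
    (hS0 : ∀ ω, S 0 ω = 1) (hf0 : f 0 = 1)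
    (hNA : ArbitrageFree f S) (H : C(Ω, ℝ)) :
    ∃ Pstar : Measure Ω, IsMartingaleMeasure f S Pstar ∧
      ∀ μ : Measure Ω, IsMartingaleMeasure f S μ →
        (∫ ω, H ω ∂μ) ≤ ∫ ω, H ω ∂Pstar := by
  have hM : IsCompact (moments S ⁻¹' {f}) :=
    (isClosed_singleton.preimage (continuous_moments S)).isCompact
  obtain ⟨P, hPf, hPmax⟩ := hM.exists_isMaxOn (mem_range_moments_of_arbitrageFree hS0 hf0 hNA)
    (ProbabilityMeasure.continuous_integral_continuousMap H).continuousOn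
  refine ⟨P, (isMartingaleMeasure_iff_moments_eq P).2 hPf, fun μ hμ => ?_⟩
  exact hPmax ((isMartingaleMeasure_iff_moments_eq ⟨μ, hμ.1⟩).1 hμ)

/-- existence of a martingale measure maximizing the expected claim. -/
theorem exists_maximizing_martingaleMeasure
    [MetricSpace Ω] [Nonempty Ω] [CompactSpace Ω] [TopologicalSpace.SeparableSpace Ω]
    [CompleteSpace Ω] [MeasurableSpace Ω] [BorelSpace Ω] {D : ℕ} (f : Fin (D + 1) → ℝ) (S : Fin (D + 1) → C(Ω, ℝ))
    (hf : ∀ d, 0 ≤ f d) (hS : ∀ d ω, 0 ≤ S d ω)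
    (hS0 : ∀ ω, S 0 ω = 1) (hf0 : f 0 = 1)
    (hNA : ArbitrageFree f S) (H : C(Ω, ℝ)) (hH : ∀ ω, 0 ≤ H ω) :
    ∃ Pstar : Measure Ω, IsMartingaleMeasure f S Pstar ∧
      ∀ μ : Measure Ω, IsMartingaleMeasure f S μ →
        (∫ ω, H ω ∂μ) ≤ ∫ ω, H ω ∂Pstar :=
  exists_maximizing_martingaleMeasure_general f S hS0 hf0 hNA H
end

section
/- Let Ω be a nonempty compact Polish space, let S_0, ..., S_D : Ω → ℝ be continuous functions with S_0 ≡ 1, and let H : Ω → ℝ be continuous. Then the cone C := { ( (∫ S_0 dμ, ..., ∫ S_D dμ), ∫ H dμ ) : μ a finite nonnegative Borel measure on Ω } is a closed subset of ℝ^{D+1} × ℝ ≅ ℝ^{D+2}. -/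
/-!
Writing a finite measure as its mass times a probability measure, the set in question is the cone
`[0, ∞) • K` over `K = {∫ F dP : P a probability measure}`, where `F = (S, H)`. By Prokhorov's
theorem the probability measures on the compact space `Ω` form a compact space, on which
`P ↦ ∫ F dP` is continuous, so `K` is compact. Since `S 0 ≡ 1`, `K` lies in the affine hyperplane
`x₀ = 1`, and a cone over a compact set in such a hyperplane is closed.
-/

open MeasureTheory Set Pointwise

section Cone

variable {E : Type*} [AddCommMonoid E] [Module ℝ E] [TopologicalSpace E] [ContinuousSMul ℝ E]
  [T2Space E]

theorem isClosed_Ici_smul_of_isCompact {K : Set E} (hK : IsCompact K) (ℓ : E →L[ℝ] ℝ)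
    (hℓK : ∀ k ∈ K, ℓ k = 1) : IsClosed (Ici (0 : ℝ) • K) := by
  refine isClosed_of_closure_subset fun x hx => ?_
  -- Near `x` the cone coincides with the compact slab `[0, ℓ x + 1] • K`.
  set U := {y | ℓ y < ℓ x + 1}
  have hU : IsOpen U := isOpen_lt ℓ.continuous continuous_const
  have hslab : U ∩ Ici (0 : ℝ) • K ⊆ Icc 0 (ℓ x + 1) • K := by
    rintro _ ⟨hcU, c, hc, k, hk, rfl⟩
    have hc' : c < ℓ x + 1 := by simpa [U, hℓK k hk] using hcU
    exact ⟨c, ⟨hc, hc'.le⟩, k, hk, rfl⟩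
  have hx_slab : x ∈ Icc 0 (ℓ x + 1) • K :=
    closure_minimal hslab (isCompact_Icc.smul_set hK).isClosed
      (hU.inter_closure ⟨lt_add_one (ℓ x), hx⟩)
  exact smul_subset_smul_right Icc_subset_Ici_self hx_slab

end Cone

section Integral

variable {Ω E : Type*} [MeasurableSpace Ω] [NormedAddCommGroup E]

theorem ContinuousMap.integrable [TopologicalSpace Ω] [OpensMeasurableSpace Ω] [CompactSpace Ω]
    (F : C(Ω, E)) (μ : Measure Ω) [IsFiniteMeasure μ] : Integrable F μ :=
  F.continuous.integrable_of_hasCompactSupport (.of_compactSpace _)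

variable [NormedSpace ℝ E]

theorem setOf_integral_finiteMeasure_eq [Nonempty Ω] (F : Ω → E) :
    {x | ∃ μ : Measure Ω, IsFiniteMeasure μ ∧ x = ∫ ω, F ω ∂μ} =
      Ici (0 : ℝ) • range fun P : ProbabilityMeasure Ω => ∫ ω, F ω ∂P := by
  ext x
  constructor
  · rintro ⟨μ, hμ, rfl⟩
    let ν : FiniteMeasure Ω := ⟨μ, hμ⟩
    refine ⟨ν.mass, ν.mass.coe_nonneg, _, ⟨ν.normalize, rfl⟩, ?_⟩
    conv_rhs => rw [show μ = ν from rfl, ν.self_eq_mass_smul_normalize,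
      FiniteMeasure.toMeasure_smul, integral_smul_nnreal_measure]
    rfl
  · rintro ⟨c, hc, _, ⟨P, rfl⟩, rfl⟩
    refine ⟨c.toNNReal • (P : Measure Ω), inferInstance, ?_⟩
    rw [integral_smul_nnreal_measure, NNReal.smul_def, Real.coe_toNNReal c hc]

variable [TopologicalSpace Ω] [OpensMeasurableSpace Ω] [CompactSpace Ω] [FiniteDimensional ℝ E]

theorem continuous_integral_probabilityMeasure (F : C(Ω, E)) :
    Continuous fun P : ProbabilityMeasure Ω => ∫ ω, F ω ∂P := by
  let e := (Module.finBasis ℝ E).equivFunL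
  suffices Continuous fun P : ProbabilityMeasure Ω => e (∫ ω, F ω ∂P) from
    e.symm.continuous.comp this |>.congr fun P => e.symm_apply_apply _
  refine continuous_pi fun i => ?_
  let φ : E →L[ℝ] ℝ := (ContinuousLinearMap.proj i).comp e.toContinuousLinearMap
  have hφ (P : ProbabilityMeasure Ω) : e (∫ ω, F ω ∂P) i = ∫ ω, φ (F ω) ∂P :=
    (φ.integral_comp_comm (F.integrable _)).symm
  exact (ProbabilityMeasure.continuous_integral_continuousMap ((φ : C(E, ℝ)).comp F)).congr
    fun P => (hφ P).symm

theorem isClosed_setOf_integral_finiteMeasure [T2Space Ω] [BorelSpace Ω] [Nonempty Ω]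
    (F : C(Ω, E)) (ℓ : E →L[ℝ] ℝ) (hℓF : ∀ ω, ℓ (F ω) = 1) :
    IsClosed {x | ∃ μ : Measure Ω, IsFiniteMeasure μ ∧ x = ∫ ω, F ω ∂μ} := by
  rw [setOf_integral_finiteMeasure_eq]
  refine isClosed_Ici_smul_of_isCompact
    (isCompact_range (continuous_integral_probabilityMeasure F)) ℓ ?_
  rintro _ ⟨P, rfl⟩
  rw [← ℓ.integral_comp_comm (F.integrable _)]
  simp [hℓF]

end Integral

variable {Ω : Type*}

theorem integral_cone_isClosed_general
    [MetricSpace Ω] [Nonempty Ω] [CompactSpace Ω]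
    [MeasurableSpace Ω] [BorelSpace Ω]
    {D : ℕ} (S : Fin (D + 1) → C(Ω, ℝ)) (hS0 : ∀ ω, S 0 ω = 1) (H : C(Ω, ℝ)) :
    IsClosed {p : (Fin (D + 1) → ℝ) × ℝ |
      ∃ μ : Measure Ω, IsFiniteMeasure μ ∧
        (∀ d, p.1 d = ∫ ω, S d ω ∂μ) ∧ p.2 = ∫ ω, H ω ∂μ} := by
  let F : C(Ω, (Fin (D + 1) → ℝ) × ℝ) := (ContinuousMap.pi S).prodMk H
  let ℓ := (ContinuousLinearMap.proj 0).comp (ContinuousLinearMap.fst ℝ (Fin (D + 1) → ℝ) ℝ)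
  convert isClosed_setOf_integral_finiteMeasure F ℓ hS0 using 3 with p
  · rfl -- product topology vs. topology of the product norm
  refine exists_congr fun μ => and_congr_right fun _ => ?_
  have hF : ∫ ω, F ω ∂μ = (fun d => ∫ ω, S d ω ∂μ, ∫ ω, H ω ∂μ) := by
    refine (integral_pair ((ContinuousMap.pi S).integrable μ) (H.integrable μ)).trans ?_
    exact Prod.ext (funext (eval_integral fun d => (S d).integrable μ)) rfl
  rw [hF, Prod.ext_iff, funext_iff]

/-- the cone of vectors of integrals of `(S_0, …, S_D, H)` over finite
nonnegative Borel measures on a compact Polish space is closed in `ℝ^{D+1} × ℝ`. -/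
theorem integral_cone_isClosed
    [MetricSpace Ω] [Nonempty Ω] [CompactSpace Ω] [TopologicalSpace.SeparableSpace Ω]
    [CompleteSpace Ω] [MeasurableSpace Ω] [BorelSpace Ω]
    {D : ℕ} (S : Fin (D + 1) → C(Ω, ℝ)) (hS0 : ∀ ω, S 0 ω = 1) (H : C(Ω, ℝ)) :
    IsClosed {p : (Fin (D + 1) → ℝ) × ℝ |
      ∃ μ : Measure Ω, IsFiniteMeasure μ ∧
        (∀ d, p.1 d = ∫ ω, S d ω ∂μ) ∧ p.2 = ∫ ω, H ω ∂μ} :=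
  integral_cone_isClosed_general S hS0 H
end

section
/- Suppose Ω is compact, and let H : Ω → ℝ be a continuous nonnegative claim. If π is a superhedge for H and P is a full support martingale measure for (f, S) with π·f = ∫ H dP, then π replicates H: π·S(ω) = H(ω) for all ω ∈ Ω. Consequently, if H is not replicable by any portfolio, the superhedging value is not attained by any full support martingale measure. -/
open MeasureTheory Filter Topology

variable {Ω : Type*}

/-!
The superhedging error `π·S - H` of a superhedge is a nonnegative continuous function whose
`P`-integral is `cost π - E_P[H]`. If this vanishes, the error is `0` `P`-a.e., hence everywhere
because `P` charges every nonempty open set.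

If `E_P[H]` equals the superhedging price, superhedges with cost tending to `E_P[H]` have payoffs
converging to `H` in `L¹(P)`. The payoffs form a finite-dimensional, hence closed, subspace of
`L¹(P)`, so `H` agrees `P`-a.e. with a payoff, and by full support everywhere: `H` is replicable.
-/

namespace ContinuousMap

variable {α : Type*} [TopologicalSpace α] [CompactSpace α] [MeasurableSpace α] [BorelSpace α]
  {μ : Measure α} [IsFiniteMeasure μ]

theorem norm_toLp_one (g : C(α, ℝ)) : ‖toLp (E := ℝ) 1 μ ℝ g‖ = ∫ x, |g x| ∂μ := by
  rw [L1.norm_eq_integral_norm]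
  exact integral_congr_ae ((coeFn_toLp (p := 1) μ (𝕜 := ℝ) g).mono fun x hx => by
    simp only [hx, Real.norm_eq_abs])

theorem mem_span_of_forall_exists_integral_abs_sub_lt [μ.IsOpenPosMeasure] {ι : Type*} [Finite ι]
    (S : ι → C(α, ℝ)) (H : C(α, ℝ))
    (h : ∀ ε > 0, ∃ g ∈ Submodule.span ℝ (Set.range S), ∫ x, |g x - H x| ∂μ < ε) :
    H ∈ Submodule.span ℝ (Set.range S) := by
  let T : C(α, ℝ) →L[ℝ] Lp ℝ 1 μ := toLp 1 μ ℝ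
  let V : Submodule ℝ (Lp ℝ 1 μ) :=
    (Submodule.span ℝ (Set.range S)).map (T : C(α, ℝ) →ₗ[ℝ] Lp ℝ 1 μ)
  have hclosed : IsClosed (V : Set (Lp ℝ 1 μ)) := by
    have := FiniteDimensional.span_of_finite ℝ (Set.finite_range S)
    exact V.closed_of_finiteDimensional
  have hH : T H ∈ closure (V : Set (Lp ℝ 1 μ)) := by
    refine Metric.mem_closure_iff.2 fun ε hε => ?_
    obtain ⟨g, hg, hlt⟩ := h ε hε
    refine ⟨T g, ⟨g, hg, rfl⟩, ?_⟩
    rw [dist_eq_norm, ← map_sub, norm_toLp_one]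
    simpa only [coe_sub, Pi.sub_apply, abs_sub_comm] using hlt
  obtain ⟨g, hg, hgH⟩ := hclosed.closure_eq ▸ hH
  exact toLp_injective μ hgH ▸ hg

end ContinuousMap

section Market

variable [TopologicalSpace Ω] {D : ℕ} {S : Fin (D + 1) → C(Ω, ℝ)}

def payoff (S : Fin (D + 1) → C(Ω, ℝ)) (π : Fin (D + 1) → ℝ) : C(Ω, ℝ) :=
  ∑ d, π d • S d

@[simp]
theorem payoff_apply (π : Fin (D + 1) → ℝ) (ω : Ω) : payoff S π ω = ∑ d, π d * S d ω := by
  simp [payoff]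

theorem isSuperhedge_single_zero_norm [CompactSpace Ω] (hS0 : ∀ ω, S 0 ω = 1) (H : C(Ω, ℝ)) :
    IsSuperhedge S H (Pi.single 0 ‖H‖) := by
  intro ω
  rw [Fintype.sum_eq_single 0 fun d hd => by simp [hd], Pi.single_eq_same, hS0, mul_one]
  exact (le_abs_self _).trans (H.norm_coe_le_norm ω)

variable [MeasurableSpace Ω] {f : Fin (D + 1) → ℝ} {P : Measure Ω}

theorem HasFullSupport.isOpenPosMeasure (hP : HasFullSupport P) : P.IsOpenPosMeasure :=
  ⟨fun U hU hne => (hP U hU hne).ne'⟩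

namespace IsMartingaleMeasure

theorem integrable_payoff (hP : IsMartingaleMeasure f S P) (π : Fin (D + 1) → ℝ) :
    Integrable (payoff S π) P := by
  rw [payoff, ContinuousMap.coe_sum]
  exact integrable_finsetSum' _ fun d _ => (hP.2 d).1.smul (π d)

theorem cost_eq_integral_payoff (hP : IsMartingaleMeasure f S P) (π : Fin (D + 1) → ℝ) :
    ∑ d, π d * f d = ∫ ω, payoff S π ω ∂P := by
  simp only [payoff_apply]
  rw [integral_finsetSum _ fun d _ => (hP.2 d).1.const_mul (π d)]
  exact Finset.sum_congr rfl fun d _ => by rw [integral_const_mul, (hP.2 d).2]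

variable [CompactSpace Ω] [OpensMeasurableSpace Ω]

theorem integrable_payoff_sub (hP : IsMartingaleMeasure f S P) (π : Fin (D + 1) → ℝ)
    (H : C(Ω, ℝ)) : Integrable (payoff S π - H) P :=
  have := hP.1
  (hP.integrable_payoff π).sub (H.continuous.integrable_of_hasCompactSupport (.of_compactSpace _))

theorem integral_payoff_sub (hP : IsMartingaleMeasure f S P) (π : Fin (D + 1) → ℝ)
    (H : C(Ω, ℝ)) : ∫ ω, (payoff S π - H) ω ∂P = ∑ d, π d * f d - ∫ ω, H ω ∂P := by
  have := hP.1
  simp only [ContinuousMap.coe_sub, Pi.sub_apply]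
  rw [integral_sub (hP.integrable_payoff π)
    (H.continuous.integrable_of_hasCompactSupport (.of_compactSpace _)), hP.cost_eq_integral_payoff]

end IsMartingaleMeasure

variable [CompactSpace Ω] {H : C(Ω, ℝ)}

theorem IsSuperhedge.payoff_eq_of_cost_eq_integral [OpensMeasurableSpace Ω] {π : Fin (D + 1) → ℝ}
    (hπ : IsSuperhedge S H π) (hP : IsMartingaleMeasure f S P) (hfs : HasFullSupport P)
    (hcost : ∑ d, π d * f d = ∫ ω, H ω ∂P) : payoff S π = H := by
  have := hfs.isOpenPosMeasure
  have hnonneg : 0 ≤ ⇑(payoff S π - H) := fun ω => by simpa using hπ ω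
  have hzero : ⇑(payoff S π - H) =ᵐ[P] 0 := by
    refine (integral_eq_zero_iff_of_nonneg hnonneg (hP.integrable_payoff_sub π H)).1 ?_
    rw [hP.integral_payoff_sub, hcost, sub_self]
  rw [← sub_eq_zero]
  exact DFunLike.coe_injective
    (((payoff S π - H).continuous.ae_eq_iff_eq P continuous_const).1 hzero)

theorem exists_payoff_eq_of_integral_eq_sInf_cost [BorelSpace Ω] (hS0 : ∀ ω, S 0 ω = 1)
    (hP : IsMartingaleMeasure f S P) (hfs : HasFullSupport P)
    (hH : ∫ ω, H ω ∂P =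
      sInf {x : ℝ | ∃ π : Fin (D + 1) → ℝ, IsSuperhedge S H π ∧ x = ∑ d, π d * f d}) :
    ∃ π, payoff S π = H := by
  have := hP.1
  have := hfs.isOpenPosMeasure
  refine (Submodule.mem_span_range_iff_exists_fun ℝ).1
    (ContinuousMap.mem_span_of_forall_exists_integral_abs_sub_lt (μ := P) S H fun ε hε => ?_)
  set costs := {x : ℝ | ∃ π : Fin (D + 1) → ℝ, IsSuperhedge S H π ∧ x = ∑ d, π d * f d}
  have hcosts : costs.Nonempty := ⟨_, _, isSuperhedge_single_zero_norm hS0 H, rfl⟩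
  obtain ⟨_, ⟨π, hπ, rfl⟩, hlt⟩ := exists_lt_of_csInf_lt hcosts (lt_add_of_pos_right _ hε)
  refine ⟨payoff S π, (Submodule.mem_span_range_iff_exists_fun ℝ).2 ⟨π, rfl⟩, ?_⟩
  calc ∫ ω, |payoff S π ω - H ω| ∂P = ∫ ω, (payoff S π - H) ω ∂P :=
        integral_congr_ae (.of_forall fun ω => abs_of_nonneg (by simpa using hπ ω))
    _ < ε := by rw [hP.integral_payoff_sub]; linarith

end Market

theorem superhedge_attained_implies_replication_general
    [MetricSpace Ω] [CompactSpace Ω]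
    [MeasurableSpace Ω] [BorelSpace Ω] {D : ℕ} (f : Fin (D + 1) → ℝ) (S : Fin (D + 1) → C(Ω, ℝ))
    (hS0 : ∀ ω, S 0 ω = 1)
    (H : C(Ω, ℝ)) :
    (∀ (π : Fin (D + 1) → ℝ) (P : Measure Ω), IsSuperhedge S H π →
      IsMartingaleMeasure f S P → HasFullSupport P →
      (∑ d, π d * f d) = (∫ ω, H ω ∂P) →
      ∀ ω, (∑ d, π d * S d ω) = H ω) ∧
    ((¬ ∃ π : Fin (D + 1) → ℝ, ∀ ω, (∑ d, π d * S d ω) = H ω) →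
      ¬ ∃ P : Measure Ω, IsMartingaleMeasure f S P ∧ HasFullSupport P ∧
        (∫ ω, H ω ∂P) =
          sInf {x : ℝ | ∃ π : Fin (D + 1) → ℝ, IsSuperhedge S H π ∧ x = ∑ d, π d * f d}) := by
  refine ⟨fun π P hπ hP hfs hcost ω => ?_, fun hnot ⟨P, hP, hfs, hH⟩ => ?_⟩
  · rw [← payoff_apply, hπ.payoff_eq_of_cost_eq_integral hP hfs hcost]
  · obtain ⟨π, hπ⟩ := exists_payoff_eq_of_integral_eq_sInf_cost hS0 hP hfs hH
    exact hnot ⟨π, fun ω => by rw [← payoff_apply, hπ]⟩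

/-- a superhedge whose cost equals the expected claim under a full support
martingale measure replicates the claim; consequently, if the claim is not replicable, the
superhedging value is not attained by any full support martingale measure. -/
theorem superhedge_attained_implies_replication
    [MetricSpace Ω] [Nonempty Ω] [CompactSpace Ω] [TopologicalSpace.SeparableSpace Ω]
    [CompleteSpace Ω] [MeasurableSpace Ω] [BorelSpace Ω] {D : ℕ} (f : Fin (D + 1) → ℝ) (S : Fin (D + 1) → C(Ω, ℝ))
    (hf : ∀ d, 0 ≤ f d) (hS : ∀ d ω, 0 ≤ S d ω)
    (hS0 : ∀ ω, S 0 ω = 1) (hf0 : f 0 = 1)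
    (H : C(Ω, ℝ)) (hH : ∀ ω, 0 ≤ H ω) :
    (∀ (π : Fin (D + 1) → ℝ) (P : Measure Ω), IsSuperhedge S H π →
      IsMartingaleMeasure f S P → HasFullSupport P →
      (∑ d, π d * f d) = (∫ ω, H ω ∂P) →
      ∀ ω, (∑ d, π d * S d ω) = H ω) ∧
    ((¬ ∃ π : Fin (D + 1) → ℝ, ∀ ω, (∑ d, π d * S d ω) = H ω) →
      ¬ ∃ P : Measure Ω, IsMartingaleMeasure f S P ∧ HasFullSupport P ∧
        (∫ ω, H ω ∂P) =
          sInf {x : ℝ | ∃ π : Fin (D + 1) → ℝ, IsSuperhedge S H π ∧ x = ∑ d, π d * f d}) :=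
  superhedge_attained_implies_replication_general f S hS0 H
end
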